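/- arXiv:1807.04741 — 6 statements merged into one kernel-verified Lean document; each statement's English description precedes it below -/
import Mathlib

section
/- Let M be a move set, let 1 ≤ q < q', and let z = (z_1, …, z_q) be a vertex of the inside-out polytope (([0,1]²)^q, A_M^q). Then the point z' = (z_1, …, z_q, (0,0), …, (0,0)) ∈ ([0,1]²)^{q'} obtained by appending q' − q pieces at the corner (0,0) is a vertex of (([0,1]²)^{q'}, A_M^{q'}), and Δ(z') = Δ(z). In particular, every denominator of a vertex for q pieces occurs as the denominator of a vertex for q' pieces. -/
/-- A basic move: a nonzero integer vector with coprime coordinates. -/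
def IsBasicMove (m : ℤ × ℤ) : Prop := m ≠ 0 ∧ Int.gcd m.1 m.2 = 1

/-- Two integer vectors are parallel if one is a rational scalar multiple of the other. -/
def IntPara (a b : ℤ × ℤ) : Prop :=
  (∃ r : ℚ, (b.1 : ℚ) = r * a.1 ∧ (b.2 : ℚ) = r * a.2) ∨
  (∃ r : ℚ, (a.1 : ℚ) = r * b.1 ∧ (a.2 : ℚ) = r * b.2)

/-- A move set: a finite set of basic moves, no two of which are parallel. -/
def IsMoveSet (M : Finset (ℤ × ℤ)) : Prop :=
  (∀ m ∈ M, IsBasicMove m) ∧ ∀ m ∈ M, ∀ m' ∈ M, m ≠ m' → ¬ IntPara m m'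

/-- The polytope ([0,1]²)^q of configurations of q pieces on the square board. -/
def cube (q : ℕ) : Set (Fin q → ℝ × ℝ) :=
  {z | ∀ i, (z i).1 ∈ Set.Icc (0:ℝ) 1 ∧ (z i).2 ∈ Set.Icc (0:ℝ) 1}

/-- The move arrangement: hyperplanes (z_j - z_i)·(d,-c) = 0 for moves m = (c,d) ∈ M. -/
def moveHyps (M : Finset (ℤ × ℤ)) (q : ℕ) : Set (Set (Fin q → ℝ × ℝ)) :=
  {H | ∃ m ∈ M, ∃ i j : Fin q, i < j ∧
    H = {z | ((z j).1 - (z i).1) * (m.2 : ℝ) - ((z j).2 - (z i).2) * (m.1 : ℝ) = 0}}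

/-- The facet hyperplanes of the hypercube ([0,1]²)^q. -/
def facetHyps (q : ℕ) : Set (Set (Fin q → ℝ × ℝ)) :=
  {H | ∃ i : Fin q,
    H = {z | (z i).1 = 0} ∨ H = {z | (z i).1 = 1} ∨
    H = {z | (z i).2 = 0} ∨ H = {z | (z i).2 = 1}}

/-- A vertex of the inside-out polytope (([0,1]²)^q, A_M^q): a point of the cube such that
the intersection of all move hyperplanes and facet hyperplanes containing it is exactly it. -/
def IsVertex (M : Finset (ℤ × ℤ)) (q : ℕ) (z : Fin q → ℝ × ℝ) : Prop :=
  z ∈ cube q ∧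
  ⋂₀ {H | H ∈ moveHyps M q ∪ facetHyps q ∧ z ∈ H} = {z}

/-- `N` is a positive integer making `N • z` integral. -/
def IsIntegralizer (N : ℕ) {q : ℕ} (z : Fin q → ℝ × ℝ) : Prop :=
  0 < N ∧ ∀ i, (∃ a : ℤ, (N : ℝ) * (z i).1 = (a : ℝ)) ∧ (∃ b : ℤ, (N : ℝ) * (z i).2 = (b : ℝ))

/-- The denominator Δ(z): the least positive integer N with N • z integral. -/
noncomputable def denom {q : ℕ} (z : Fin q → ℝ × ℝ) : ℕ := sInf {N | IsIntegralizer N z}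

/-- The number of nonattacking configurations of q riders with move set M on the n×n board. -/
noncomputable def uCount (M : Finset (ℤ × ℤ)) (q n : ℕ) : ℕ :=
  Nat.card {S : Finset (ℤ × ℤ) //
    (∀ p ∈ S, p ∈ Finset.Icc (1 : ℤ) n ×ˢ Finset.Icc (1 : ℤ) n) ∧ S.card = q ∧
    ∀ a ∈ S, ∀ b ∈ S, a ≠ b → ∀ m ∈ M, ¬ ∃ t : ℤ, b - a = t • m}

/-!
Restricting a configuration to its first `q` pieces pulls move hyperplanes and facet hyperplanes
back to hyperplanes of the same kind, so any point on every hyperplane through `z'` restricts to a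
point on every hyperplane through `z`, i.e. to `z` itself. The appended pieces are pinned to the
corner by the facets `x_i = 0` and `y_i = 0`. Since they have integral coordinates, they do not
change which integers clear the denominators.
-/

def hyperplaneFlat (M : Finset (ℤ × ℤ)) (q : ℕ) (z : Fin q → ℝ × ℝ) :
    Set (Fin q → ℝ × ℝ) :=
  ⋂₀ {H | H ∈ moveHyps M q ∪ facetHyps q ∧ z ∈ H}

def padOrigin {q : ℕ} (q' : ℕ) (z : Fin q → ℝ × ℝ) : Fin q' → ℝ × ℝ :=
  fun i => if h : (i : ℕ) < q then z ⟨i, h⟩ else ((0 : ℝ), (0 : ℝ))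

section Restriction

variable {q q' : ℕ} (hle : q ≤ q')

theorem preimage_castLE_mem_moveHyps (M : Finset (ℤ × ℤ)) {H : Set (Fin q → ℝ × ℝ)}
    (hH : H ∈ moveHyps M q) : (· ∘ Fin.castLE hle) ⁻¹' H ∈ moveHyps M q' := by
  obtain ⟨m, hm, i, j, hij, rfl⟩ := hH
  exact ⟨m, hm, Fin.castLE hle i, Fin.castLE hle j, (Fin.castLE_lt_castLE_iff hle).2 hij, rfl⟩

theorem preimage_castLE_mem_facetHyps {H : Set (Fin q → ℝ × ℝ)} (hH : H ∈ facetHyps q) :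
    (· ∘ Fin.castLE hle) ⁻¹' H ∈ facetHyps q' := by
  obtain ⟨i, hi⟩ := hH
  exact ⟨Fin.castLE hle i, by rcases hi with rfl | rfl | rfl | rfl <;> simp⟩

theorem comp_castLE_mem_hyperplaneFlat (M : Finset (ℤ × ℤ)) {x w : Fin q' → ℝ × ℝ}
    (hw : w ∈ hyperplaneFlat M q' x) :
    w ∘ Fin.castLE hle ∈ hyperplaneFlat M q (x ∘ Fin.castLE hle) := by
  rintro H ⟨hHmem, hxH⟩
  have hpre : (· ∘ Fin.castLE hle) ⁻¹' H ∈ moveHyps M q' ∪ facetHyps q' := by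
    rcases hHmem with hmove | hfacet
    · exact Or.inl (preimage_castLE_mem_moveHyps hle M hmove)
    · exact Or.inr (preimage_castLE_mem_facetHyps hle hfacet)
  exact hw _ ⟨hpre, hxH⟩

end Restriction

section PadOrigin

variable {q : ℕ} (q' : ℕ) (z : Fin q → ℝ × ℝ)

theorem padOrigin_castLE (hle : q ≤ q') (i : Fin q) :
    padOrigin q' z (Fin.castLE hle i) = z i := by
  simp [padOrigin]

theorem padOrigin_comp_castLE (hle : q ≤ q') : padOrigin q' z ∘ Fin.castLE hle = z :=
  funext (padOrigin_castLE q' z hle)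

theorem padOrigin_of_le {i : Fin q'} (hi : q ≤ i) : padOrigin q' z i = (0, 0) := by
  simp [padOrigin, not_lt.2 hi]

theorem padOrigin_mem_cube (hz : z ∈ cube q) : padOrigin q' z ∈ cube q' := by
  intro i
  unfold padOrigin
  split_ifs
  · exact hz _
  · simp

theorem eq_padOrigin_of_mem_hyperplaneFlat (M : Finset (ℤ × ℤ)) (hle : q ≤ q')
    (hz : hyperplaneFlat M q z = {z}) {w : Fin q' → ℝ × ℝ}
    (hw : w ∈ hyperplaneFlat M q' (padOrigin q' z)) : w = padOrigin q' z := by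
  have hrestrict : w ∘ Fin.castLE hle = z := by
    have := comp_castLE_mem_hyperplaneFlat hle M hw
    rwa [padOrigin_comp_castLE, hz] at this
  funext i
  by_cases hi : (i : ℕ) < q
  · have := congrFun hrestrict ⟨i, hi⟩
    simp only [Function.comp_apply, Fin.castLE_mk] at this
    simp [padOrigin, hi, ← this]
  · have hcorner := padOrigin_of_le q' z (not_lt.1 hi)
    have hx : (w i).1 = 0 :=
      hw {v | (v i).1 = 0} ⟨Or.inr ⟨i, Or.inl rfl⟩, by simp [hcorner]⟩
    have hy : (w i).2 = 0 :=
      hw {v | (v i).2 = 0} ⟨Or.inr ⟨i, Or.inr (Or.inr (Or.inl rfl))⟩, by simp [hcorner]⟩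
    rw [hcorner]
    exact Prod.ext hx hy

theorem isVertex_padOrigin (M : Finset (ℤ × ℤ)) (hle : q ≤ q') (hz : IsVertex M q z) :
    IsVertex M q' (padOrigin q' z) := by
  refine ⟨padOrigin_mem_cube q' z hz.1, Set.eq_singleton_iff_unique_mem.2 ⟨?_, ?_⟩⟩
  · exact fun H hH => hH.2
  · exact fun w hw => eq_padOrigin_of_mem_hyperplaneFlat q' z M hle hz.2 hw

theorem isIntegralizer_padOrigin_iff (hle : q ≤ q') (N : ℕ) :
    IsIntegralizer N (padOrigin q' z) ↔ IsIntegralizer N z := by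
  refine and_congr_right fun _ => ⟨fun h i => ?_, fun h i => ?_⟩
  · simpa only [padOrigin_castLE] using h (Fin.castLE hle i)
  · unfold padOrigin
    split_ifs
    · exact h _
    · exact ⟨⟨0, by simp⟩, ⟨0, by simp⟩⟩

theorem denom_padOrigin (hle : q ≤ q') : denom (padOrigin q' z) = denom z := by
  simp only [denom, isIntegralizer_padOrigin_iff q' z hle]

end PadOrigin

theorem stmt1_general (M : Finset (ℤ × ℤ)) (q q' : ℕ) (hqq' : q < q')
    (z : Fin q → ℝ × ℝ) (hz : IsVertex M q z) :
    IsVertex M q' (fun i : Fin q' => if h : (i : ℕ) < q then z ⟨i, h⟩ else ((0 : ℝ), (0 : ℝ))) ∧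
    denom (fun i : Fin q' => if h : (i : ℕ) < q then z ⟨i, h⟩ else ((0 : ℝ), (0 : ℝ))) = denom z :=
  ⟨isVertex_padOrigin q' z M hqq'.le hz, denom_padOrigin q' z hqq'.le⟩

theorem stmt1 (M : Finset (ℤ × ℤ)) (hM : IsMoveSet M) (q q' : ℕ) (hq : 1 ≤ q) (hqq' : q < q')
    (z : Fin q → ℝ × ℝ) (hz : IsVertex M q z) :
    IsVertex M q' (fun i : Fin q' => if h : (i : ℕ) < q then z ⟨i, h⟩ else ((0 : ℝ), (0 : ℝ))) ∧
    denom (fun i : Fin q' => if h : (i : ℕ) < q then z ⟨i, h⟩ else ((0 : ℝ), (0 : ℝ))) = denom z :=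
  stmt1_general M q q' hqq' z hz
end

section
/- Let M be a nonempty move set. Then every vertex of the inside-out polytope (([0,1]²)^q, A_M^q) has integer coordinates (i.e., all coordinates in {0,1}) for every q ≥ 1 if and only if: every move of M is parallel to one of (1,0), (0,1), (1,1), (1,−1); M has at most two moves; and the moves of M are not both diagonal (that is, M does not consist of one move parallel to (1,1) and one parallel to (1,−1)). Equivalently, the only pieces whose inside-out polytope denominator is 1 for all q ≥ 1 are the semirook, rook, semibishop, and anassa. -/
/-! ### Auxiliary machinery -/

/-- The statement "all vertices are integral". -/
def LHSP (M : Finset (ℤ × ℤ)) : Prop :=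
  ∀ q : ℕ, 1 ≤ q → ∀ z : Fin q → ℝ × ℝ, IsVertex M q z →
    ∀ i, ((z i).1 = 0 ∨ (z i).1 = 1) ∧ ((z i).2 = 0 ∨ (z i).2 = 1)

/-- Indicator of having fractional part `θ`. -/
noncomputable def rho (θ s : ℝ) : ℝ := if Int.fract s = θ then 1 else 0

lemma rho_eq_of_eq (θ : ℝ) {s t : ℝ} (h : s = t) : rho θ s = rho θ t := by rw [h]

lemma rho_sub_one (θ s : ℝ) : rho θ (s - 1) = rho θ s := by
  have : Int.fract (s - ((1:ℤ):ℝ)) = Int.fract s := Int.fract_sub_intCast s 1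
  simp only [rho]
  rw [show ((1:ℤ):ℝ) = (1:ℝ) by norm_cast] at this
  rw [this]

lemma rho_of_fract_zero {θ : ℝ} (hθ : θ ≠ 0) {s : ℝ} (h : Int.fract s = 0) : rho θ s = 0 := by
  simp only [rho, h]
  exact if_neg (fun hh => hθ hh.symm)

lemma rho_zero {θ : ℝ} (hθ : θ ≠ 0) : rho θ 0 = 0 :=
  rho_of_fract_zero hθ (by simp)

lemma rho_fract_self (θ s : ℝ) (h : Int.fract s = θ) : rho θ s = 1 := by
  simp [rho, h]

/-- The perturbation map. -/
noncomputable def pert (θ : ℝ) (A B : ℝ × ℝ → ℝ) (w : ℝ × ℝ) : ℝ × ℝ :=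
  (w.1 + rho θ (A w) - rho θ (A w - w.1), w.2 + rho θ (B w) - rho θ (B w - w.2))

/-- Master lemma: a perturbation preserving the move hyperplanes fixes any vertex. -/
lemma master {M : Finset (ℤ × ℤ)} {q : ℕ} {z : Fin q → ℝ × ℝ}
    (hv : IsVertex M q z) (θ : ℝ) (hθ : θ ≠ 0) (A B : ℝ × ℝ → ℝ)
    (hmv : ∀ m ∈ M, ∀ w w' : ℝ × ℝ,
      (w'.1 - w.1) * (m.2:ℝ) - (w'.2 - w.2) * (m.1:ℝ) = 0 →
      ((pert θ A B w').1 - (pert θ A B w).1) * (m.2:ℝ)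
        - ((pert θ A B w').2 - (pert θ A B w).2) * (m.1:ℝ) = 0) :
    ∀ i, pert θ A B (z i) = z i := by
  have hmem : (fun i => pert θ A B (z i)) ∈
      ⋂₀ {H | H ∈ moveHyps M q ∪ facetHyps q ∧ z ∈ H} := by
    rintro H ⟨hH | hH, hzH⟩
    · obtain ⟨m, hm, i, j, hij, rfl⟩ := hH
      exact hmv m hm (z i) (z j) hzH
    · obtain ⟨i, hH⟩ := hH
      rcases hH with rfl | rfl | rfl | rfl
      · show (pert θ A B (z i)).1 = 0
        have h0 : (z i).1 = 0 := hzH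
        simp only [pert, h0]
        ring_nf
      · show (pert θ A B (z i)).1 = 1
        have h0 : (z i).1 = 1 := hzH
        simp only [pert, h0, rho_sub_one]
        ring
      · show (pert θ A B (z i)).2 = 0
        have h0 : (z i).2 = 0 := hzH
        simp only [pert, h0]
        ring_nf
      · show (pert θ A B (z i)).2 = 1
        have h0 : (z i).2 = 1 := hzH
        simp only [pert, h0, rho_sub_one]
        ring
  rw [hv.2] at hmem
  intro i
  exact congrFun hmem i
/-! ### Move-preservation lemmas for the five schemes -/

lemma cast2_ne {m : ℤ × ℤ} (hm0 : m ≠ 0) (hd : m.1 = m.2) : (m.2:ℝ) ≠ 0 := by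
  have : m.2 ≠ 0 := by
    intro h
    exact hm0 (Prod.ext_iff.mpr ⟨by simp [hd, h], by simp [h]⟩)
  exact_mod_cast this

lemma cast1_ne {m : ℤ × ℤ} (hm0 : m ≠ 0) (hd : m.2 = 0) : (m.1:ℝ) ≠ 0 := by
  have : m.1 ≠ 0 := by
    intro h
    exact hm0 (Prod.ext_iff.mpr ⟨by simp [h], by simp [hd]⟩)
  exact_mod_cast this

lemma cast2_ne' {m : ℤ × ℤ} (hm0 : m ≠ 0) (hd : m.1 = -m.2) : (m.2:ℝ) ≠ 0 := by
  have : m.2 ≠ 0 := by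
    intro h
    exact hm0 (Prod.ext_iff.mpr ⟨by simp [hd, h], by simp [h]⟩)
  exact_mod_cast this

lemma cast2_ne'' {m : ℤ × ℤ} (hm0 : m ≠ 0) (hd : m.1 = 0) : (m.2:ℝ) ≠ 0 := by
  have : m.2 ≠ 0 := by
    intro h
    exact hm0 (Prod.ext_iff.mpr ⟨by simp [hd], by simp [h]⟩)
  exact_mod_cast this

lemma pres_dh (θ : ℝ) {m : ℤ × ℤ} (hm0 : m ≠ 0) (hcl : m.1 = m.2 ∨ m.2 = 0)
    (w w' : ℝ × ℝ) (h : (w'.1 - w.1) * (m.2:ℝ) - (w'.2 - w.2) * (m.1:ℝ) = 0) :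
    ((pert θ (fun v => v.2) (fun v => v.2) w').1 - (pert θ (fun v => v.2) (fun v => v.2) w).1) * (m.2:ℝ)
      - ((pert θ (fun v => v.2) (fun v => v.2) w').2 - (pert θ (fun v => v.2) (fun v => v.2) w).2) * (m.1:ℝ) = 0 := by
  rcases hcl with hd | h2
  · have hm2 : (m.2:ℝ) ≠ 0 := cast2_ne hm0 hd
    have h1 : (m.1:ℝ) = (m.2:ℝ) := by exact_mod_cast hd
    have hΔ : w'.1 - w.1 = w'.2 - w.2 := by
      have h' : (w'.1 - w.1 - (w'.2 - w.2)) * (m.2:ℝ) = 0 := by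
        linear_combination h + (w'.2 - w.2) * h1
      rcases mul_eq_zero.mp h' with h'' | h''
      · linarith
      · exact absurd h'' hm2
    have key : rho θ (w'.2 - w'.1) = rho θ (w.2 - w.1) := rho_eq_of_eq θ (by linarith)
    simp only [pert, sub_self]
    rw [key]
    linear_combination h - (rho θ w'.2 - rho θ w.2) * h1
  · have hm1 : (m.1:ℝ) ≠ 0 := cast1_ne hm0 h2
    have h20 : (m.2:ℝ) = 0 := by exact_mod_cast h2
    have hΔ : w'.2 = w.2 := by
      have h' : (w'.2 - w.2) * (m.1:ℝ) = 0 := by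
        linear_combination -h + (w'.1 - w.1) * h20
      rcases mul_eq_zero.mp h' with h'' | h''
      · linarith
      · exact absurd h'' hm1
    simp only [pert, sub_self]
    rw [hΔ, h20]
    ring

lemma pres_dv (θ : ℝ) {m : ℤ × ℤ} (hm0 : m ≠ 0) (hcl : m.1 = m.2 ∨ m.1 = 0)
    (w w' : ℝ × ℝ) (h : (w'.1 - w.1) * (m.2:ℝ) - (w'.2 - w.2) * (m.1:ℝ) = 0) :
    ((pert θ (fun v => v.1) (fun v => v.1) w').1 - (pert θ (fun v => v.1) (fun v => v.1) w).1) * (m.2:ℝ)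
      - ((pert θ (fun v => v.1) (fun v => v.1) w').2 - (pert θ (fun v => v.1) (fun v => v.1) w).2) * (m.1:ℝ) = 0 := by
  rcases hcl with hd | h2
  · have hm2 : (m.2:ℝ) ≠ 0 := cast2_ne hm0 hd
    have h1 : (m.1:ℝ) = (m.2:ℝ) := by exact_mod_cast hd
    have hΔ : w'.1 - w.1 = w'.2 - w.2 := by
      have h' : (w'.1 - w.1 - (w'.2 - w.2)) * (m.2:ℝ) = 0 := by
        linear_combination h + (w'.2 - w.2) * h1
      rcases mul_eq_zero.mp h' with h'' | h''
      · linarith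
      · exact absurd h'' hm2
    have key : rho θ (w'.1 - w'.2) = rho θ (w.1 - w.2) := rho_eq_of_eq θ (by linarith)
    simp only [pert, sub_self]
    rw [key]
    linear_combination h - (rho θ w'.1 - rho θ w.1) * h1
  · have hm2 : (m.2:ℝ) ≠ 0 := cast2_ne'' hm0 h2
    have h10 : (m.1:ℝ) = 0 := by exact_mod_cast h2
    have hΔ : w'.1 = w.1 := by
      have h' : (w'.1 - w.1) * (m.2:ℝ) = 0 := by
        linear_combination h + (w'.2 - w.2) * h10
      rcases mul_eq_zero.mp h' with h'' | h''
      · linarith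
      · exact absurd h'' hm2
    simp only [pert, sub_self]
    rw [hΔ, h10]
    ring

lemma pres_ah (θ : ℝ) {m : ℤ × ℤ} (hm0 : m ≠ 0) (hcl : m.1 = -m.2 ∨ m.2 = 0)
    (w w' : ℝ × ℝ) (h : (w'.1 - w.1) * (m.2:ℝ) - (w'.2 - w.2) * (m.1:ℝ) = 0) :
    ((pert θ (fun v => v.1 + v.2) (fun v => v.2) w').1 - (pert θ (fun v => v.1 + v.2) (fun v => v.2) w).1) * (m.2:ℝ)
      - ((pert θ (fun v => v.1 + v.2) (fun v => v.2) w').2 - (pert θ (fun v => v.1 + v.2) (fun v => v.2) w).2) * (m.1:ℝ) = 0 := by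
  rcases hcl with hd | h2
  · have hm2 : (m.2:ℝ) ≠ 0 := cast2_ne' hm0 hd
    have h1 : (m.1:ℝ) = -(m.2:ℝ) := by exact_mod_cast hd
    have hΔ : w'.1 + w'.2 = w.1 + w.2 := by
      have h' : (w'.1 + w'.2 - (w.1 + w.2)) * (m.2:ℝ) = 0 := by
        linear_combination h + (w'.2 - w.2) * h1
      rcases mul_eq_zero.mp h' with h'' | h''
      · linarith
      · exact absurd h'' hm2
    have key : rho θ (w'.1 + w'.2) = rho θ (w.1 + w.2) := rho_eq_of_eq θ hΔ
    simp only [pert, sub_self, add_sub_cancel_left]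
    rw [key]
    linear_combination h + (rho θ w.2 - rho θ w'.2) * h1
  · have hm1 : (m.1:ℝ) ≠ 0 := cast1_ne hm0 h2
    have h20 : (m.2:ℝ) = 0 := by exact_mod_cast h2
    have hΔ : w'.2 = w.2 := by
      have h' : (w'.2 - w.2) * (m.1:ℝ) = 0 := by
        linear_combination -h + (w'.1 - w.1) * h20
      rcases mul_eq_zero.mp h' with h'' | h''
      · linarith
      · exact absurd h'' hm1
    simp only [pert, sub_self, add_sub_cancel_left]
    rw [hΔ, h20]
    ring

lemma pres_av (θ : ℝ) {m : ℤ × ℤ} (hm0 : m ≠ 0) (hcl : m.1 = -m.2 ∨ m.1 = 0)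
    (w w' : ℝ × ℝ) (h : (w'.1 - w.1) * (m.2:ℝ) - (w'.2 - w.2) * (m.1:ℝ) = 0) :
    ((pert θ (fun v => v.1) (fun v => v.1 + v.2) w').1 - (pert θ (fun v => v.1) (fun v => v.1 + v.2) w).1) * (m.2:ℝ)
      - ((pert θ (fun v => v.1) (fun v => v.1 + v.2) w').2 - (pert θ (fun v => v.1) (fun v => v.1 + v.2) w).2) * (m.1:ℝ) = 0 := by
  rcases hcl with hd | h2
  · have hm2 : (m.2:ℝ) ≠ 0 := cast2_ne' hm0 hd
    have h1 : (m.1:ℝ) = -(m.2:ℝ) := by exact_mod_cast hd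
    have hΔ : w'.1 + w'.2 = w.1 + w.2 := by
      have h' : (w'.1 + w'.2 - (w.1 + w.2)) * (m.2:ℝ) = 0 := by
        linear_combination h + (w'.2 - w.2) * h1
      rcases mul_eq_zero.mp h' with h'' | h''
      · linarith
      · exact absurd h'' hm2
    have key : rho θ (w'.1 + w'.2) = rho θ (w.1 + w.2) := rho_eq_of_eq θ hΔ
    simp only [pert, sub_self, add_sub_cancel_right]
    rw [key]
    linear_combination h + (rho θ w'.1 - rho θ w.1) * h1
  · have hm2 : (m.2:ℝ) ≠ 0 := cast2_ne'' hm0 h2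
    have h10 : (m.1:ℝ) = 0 := by exact_mod_cast h2
    have hΔ : w'.1 = w.1 := by
      have h' : (w'.1 - w.1) * (m.2:ℝ) = 0 := by
        linear_combination h + (w'.2 - w.2) * h10
      rcases mul_eq_zero.mp h' with h'' | h''
      · linarith
      · exact absurd h'' hm2
    simp only [pert, sub_self, add_sub_cancel_right]
    rw [hΔ, h10]
    ring

lemma pres_rook (θ : ℝ) {m : ℤ × ℤ} (hm0 : m ≠ 0) (hcl : m.1 = 0 ∨ m.2 = 0)
    (w w' : ℝ × ℝ) (h : (w'.1 - w.1) * (m.2:ℝ) - (w'.2 - w.2) * (m.1:ℝ) = 0) :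
    ((pert θ (fun v => v.1) (fun v => v.2) w').1 - (pert θ (fun v => v.1) (fun v => v.2) w).1) * (m.2:ℝ)
      - ((pert θ (fun v => v.1) (fun v => v.2) w').2 - (pert θ (fun v => v.1) (fun v => v.2) w).2) * (m.1:ℝ) = 0 := by
  rcases hcl with h2 | h2
  · have hm2 : (m.2:ℝ) ≠ 0 := cast2_ne'' hm0 h2
    have h10 : (m.1:ℝ) = 0 := by exact_mod_cast h2
    have hΔ : w'.1 = w.1 := by
      have h' : (w'.1 - w.1) * (m.2:ℝ) = 0 := by
        linear_combination h + (w'.2 - w.2) * h10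
      rcases mul_eq_zero.mp h' with h'' | h''
      · linarith
      · exact absurd h'' hm2
    simp only [pert, sub_self]
    rw [hΔ, h10]
    ring
  · have hm1 : (m.1:ℝ) ≠ 0 := cast1_ne hm0 h2
    have h20 : (m.2:ℝ) = 0 := by exact_mod_cast h2
    have hΔ : w'.2 = w.2 := by
      have h' : (w'.2 - w.2) * (m.1:ℝ) = 0 := by
        linear_combination -h + (w'.1 - w.1) * h20
      rcases mul_eq_zero.mp h' with h'' | h''
      · linarith
      · exact absurd h'' hm1
    simp only [pert, sub_self]
    rw [hΔ, h20]
    ring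
/-! ### Scheme lemmas -/

lemma fract_one_sub {x : ℝ} (h0 : 0 < x) (h1 : x < 1) : Int.fract (1 - x) = 1 - x :=
  Int.fract_eq_self.2 ⟨by linarith, by linarith⟩

lemma scheme_dh {M : Finset (ℤ × ℤ)} {q : ℕ} {z : Fin q → ℝ × ℝ} (hv : IsVertex M q z)
    (hcl : ∀ m ∈ M, m ≠ (0:ℤ×ℤ) ∧ (m.1 = m.2 ∨ m.2 = 0)) (i : Fin q) :
    ((z i).1 = 0 ∨ (z i).1 = 1) ∧ ((z i).2 = 0 ∨ (z i).2 = 1) := by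
  by_cases hy : (z i).2 = 0 ∨ (z i).2 = 1
  · refine ⟨?_, hy⟩
    by_contra hx
    push_neg at hx
    obtain ⟨hxne0, hxne1⟩ := hx
    have hxIcc := (hv.1 i).1
    have hx0 : 0 < (z i).1 := lt_of_le_of_ne hxIcc.1 (Ne.symm hxne0)
    have hx1 : (z i).1 < 1 := lt_of_le_of_ne hxIcc.2 hxne1
    set θ := Int.fract ((z i).2 - (z i).1) with hθdef
    have hfr : Int.fract ((z i).2 - (z i).1) = 1 - (z i).1 := by
      rcases hy with h | h
      · rw [h, show (0:ℝ) - (z i).1 = (1 - (z i).1) - ((1:ℤ):ℝ) by push_cast; ring,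
          Int.fract_sub_intCast]
        exact fract_one_sub hx0 hx1
      · rw [h]; exact fract_one_sub hx0 hx1
    have hθ : θ ≠ 0 := by rw [hθdef, hfr]; exact ne_of_gt (by linarith)
    have hfix := master hv θ hθ (fun v => v.2) (fun v => v.2)
      (fun m hm w w' h => pres_dh θ (hcl m hm).1 (hcl m hm).2 w w' h) i
    have h1 : (pert θ (fun v => v.2) (fun v => v.2) (z i)).1 = (z i).1 :=
      congrArg Prod.fst hfix
    simp only [pert] at h1
    rw [rho_of_fract_zero hθ (by rcases hy with h | h <;> rw [h] <;> simp),
      rho_fract_self θ _ hθdef.symm] at h1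
    linarith
  · exfalso
    push_neg at hy
    obtain ⟨hyne0, hyne1⟩ := hy
    have hyIcc := (hv.1 i).2
    have hy0 : 0 < (z i).2 := lt_of_le_of_ne hyIcc.1 (Ne.symm hyne0)
    have hy1 : (z i).2 < 1 := lt_of_le_of_ne hyIcc.2 hyne1
    set θ := Int.fract ((z i).2) with hθdef
    have hfr : Int.fract ((z i).2) = (z i).2 := Int.fract_eq_self.2 ⟨hy0.le, hy1⟩
    have hθ : θ ≠ 0 := by rw [hθdef, hfr]; exact hyne0
    have hfix := master hv θ hθ (fun v => v.2) (fun v => v.2)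
      (fun m hm w w' h => pres_dh θ (hcl m hm).1 (hcl m hm).2 w w' h) i
    have h2 : (pert θ (fun v => v.2) (fun v => v.2) (z i)).2 = (z i).2 :=
      congrArg Prod.snd hfix
    simp only [pert, sub_self] at h2
    rw [rho_zero hθ, rho_fract_self θ _ hθdef.symm] at h2
    linarith

lemma scheme_dv {M : Finset (ℤ × ℤ)} {q : ℕ} {z : Fin q → ℝ × ℝ} (hv : IsVertex M q z)
    (hcl : ∀ m ∈ M, m ≠ (0:ℤ×ℤ) ∧ (m.1 = m.2 ∨ m.1 = 0)) (i : Fin q) :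
    ((z i).1 = 0 ∨ (z i).1 = 1) ∧ ((z i).2 = 0 ∨ (z i).2 = 1) := by
  by_cases hx : (z i).1 = 0 ∨ (z i).1 = 1
  · refine ⟨hx, ?_⟩
    by_contra hy
    push_neg at hy
    obtain ⟨hyne0, hyne1⟩ := hy
    have hyIcc := (hv.1 i).2
    have hy0 : 0 < (z i).2 := lt_of_le_of_ne hyIcc.1 (Ne.symm hyne0)
    have hy1 : (z i).2 < 1 := lt_of_le_of_ne hyIcc.2 hyne1
    set θ := Int.fract ((z i).1 - (z i).2) with hθdef
    have hfr : Int.fract ((z i).1 - (z i).2) = 1 - (z i).2 := by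
      rcases hx with h | h
      · rw [h, show (0:ℝ) - (z i).2 = (1 - (z i).2) - ((1:ℤ):ℝ) by push_cast; ring,
          Int.fract_sub_intCast]
        exact fract_one_sub hy0 hy1
      · rw [h]; exact fract_one_sub hy0 hy1
    have hθ : θ ≠ 0 := by rw [hθdef, hfr]; exact ne_of_gt (by linarith)
    have hfix := master hv θ hθ (fun v => v.1) (fun v => v.1)
      (fun m hm w w' h => pres_dv θ (hcl m hm).1 (hcl m hm).2 w w' h) i
    have h2 : (pert θ (fun v => v.1) (fun v => v.1) (z i)).2 = (z i).2 :=
      congrArg Prod.snd hfix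
    simp only [pert] at h2
    rw [rho_of_fract_zero hθ (by rcases hx with h | h <;> rw [h] <;> simp),
      rho_fract_self θ _ hθdef.symm] at h2
    linarith
  · exfalso
    push_neg at hx
    obtain ⟨hxne0, hxne1⟩ := hx
    have hxIcc := (hv.1 i).1
    have hx0 : 0 < (z i).1 := lt_of_le_of_ne hxIcc.1 (Ne.symm hxne0)
    have hx1 : (z i).1 < 1 := lt_of_le_of_ne hxIcc.2 hxne1
    set θ := Int.fract ((z i).1) with hθdef
    have hfr : Int.fract ((z i).1) = (z i).1 := Int.fract_eq_self.2 ⟨hx0.le, hx1⟩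
    have hθ : θ ≠ 0 := by rw [hθdef, hfr]; exact hxne0
    have hfix := master hv θ hθ (fun v => v.1) (fun v => v.1)
      (fun m hm w w' h => pres_dv θ (hcl m hm).1 (hcl m hm).2 w w' h) i
    have h1 : (pert θ (fun v => v.1) (fun v => v.1) (z i)).1 = (z i).1 :=
      congrArg Prod.fst hfix
    simp only [pert, sub_self] at h1
    rw [rho_zero hθ, rho_fract_self θ _ hθdef.symm] at h1
    linarith

lemma scheme_ah {M : Finset (ℤ × ℤ)} {q : ℕ} {z : Fin q → ℝ × ℝ} (hv : IsVertex M q z)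
    (hcl : ∀ m ∈ M, m ≠ (0:ℤ×ℤ) ∧ (m.1 = -m.2 ∨ m.2 = 0)) (i : Fin q) :
    ((z i).1 = 0 ∨ (z i).1 = 1) ∧ ((z i).2 = 0 ∨ (z i).2 = 1) := by
  by_cases hy : (z i).2 = 0 ∨ (z i).2 = 1
  · refine ⟨?_, hy⟩
    by_contra hx
    push_neg at hx
    obtain ⟨hxne0, hxne1⟩ := hx
    have hxIcc := (hv.1 i).1
    have hx0 : 0 < (z i).1 := lt_of_le_of_ne hxIcc.1 (Ne.symm hxne0)
    have hx1 : (z i).1 < 1 := lt_of_le_of_ne hxIcc.2 hxne1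
    set θ := Int.fract ((z i).1 + (z i).2) with hθdef
    have hfr : Int.fract ((z i).1 + (z i).2) = (z i).1 := by
      rcases hy with h | h
      · rw [h, add_zero]; exact Int.fract_eq_self.2 ⟨hx0.le, hx1⟩
      · rw [h, show (z i).1 + 1 = (z i).1 + ((1:ℤ):ℝ) by push_cast; ring,
          Int.fract_add_intCast]
        exact Int.fract_eq_self.2 ⟨hx0.le, hx1⟩
    have hθ : θ ≠ 0 := by rw [hθdef, hfr]; exact hxne0
    have hfix := master hv θ hθ (fun v => v.1 + v.2) (fun v => v.2)
      (fun m hm w w' h => pres_ah θ (hcl m hm).1 (hcl m hm).2 w w' h) i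
    have h1 : (pert θ (fun v => v.1 + v.2) (fun v => v.2) (z i)).1 = (z i).1 :=
      congrArg Prod.fst hfix
    simp only [pert, add_sub_cancel_left] at h1
    rw [rho_fract_self θ _ hθdef.symm,
      rho_of_fract_zero hθ (by rcases hy with h | h <;> rw [h] <;> simp)] at h1
    linarith
  · exfalso
    push_neg at hy
    obtain ⟨hyne0, hyne1⟩ := hy
    have hyIcc := (hv.1 i).2
    have hy0 : 0 < (z i).2 := lt_of_le_of_ne hyIcc.1 (Ne.symm hyne0)
    have hy1 : (z i).2 < 1 := lt_of_le_of_ne hyIcc.2 hyne1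
    set θ := Int.fract ((z i).2) with hθdef
    have hfr : Int.fract ((z i).2) = (z i).2 := Int.fract_eq_self.2 ⟨hy0.le, hy1⟩
    have hθ : θ ≠ 0 := by rw [hθdef, hfr]; exact hyne0
    have hfix := master hv θ hθ (fun v => v.1 + v.2) (fun v => v.2)
      (fun m hm w w' h => pres_ah θ (hcl m hm).1 (hcl m hm).2 w w' h) i
    have h2 : (pert θ (fun v => v.1 + v.2) (fun v => v.2) (z i)).2 = (z i).2 :=
      congrArg Prod.snd hfix
    simp only [pert, sub_self] at h2
    rw [rho_zero hθ, rho_fract_self θ _ hθdef.symm] at h2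
    linarith

lemma scheme_av {M : Finset (ℤ × ℤ)} {q : ℕ} {z : Fin q → ℝ × ℝ} (hv : IsVertex M q z)
    (hcl : ∀ m ∈ M, m ≠ (0:ℤ×ℤ) ∧ (m.1 = -m.2 ∨ m.1 = 0)) (i : Fin q) :
    ((z i).1 = 0 ∨ (z i).1 = 1) ∧ ((z i).2 = 0 ∨ (z i).2 = 1) := by
  by_cases hx : (z i).1 = 0 ∨ (z i).1 = 1
  · refine ⟨hx, ?_⟩
    by_contra hy
    push_neg at hy
    obtain ⟨hyne0, hyne1⟩ := hy
    have hyIcc := (hv.1 i).2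
    have hy0 : 0 < (z i).2 := lt_of_le_of_ne hyIcc.1 (Ne.symm hyne0)
    have hy1 : (z i).2 < 1 := lt_of_le_of_ne hyIcc.2 hyne1
    set θ := Int.fract ((z i).1 + (z i).2) with hθdef
    have hfr : Int.fract ((z i).1 + (z i).2) = (z i).2 := by
      rcases hx with h | h
      · rw [h, zero_add]; exact Int.fract_eq_self.2 ⟨hy0.le, hy1⟩
      · rw [h, show (1:ℝ) + (z i).2 = (z i).2 + ((1:ℤ):ℝ) by push_cast; ring,
          Int.fract_add_intCast]
        exact Int.fract_eq_self.2 ⟨hy0.le, hy1⟩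
    have hθ : θ ≠ 0 := by rw [hθdef, hfr]; exact hyne0
    have hfix := master hv θ hθ (fun v => v.1) (fun v => v.1 + v.2)
      (fun m hm w w' h => pres_av θ (hcl m hm).1 (hcl m hm).2 w w' h) i
    have h2 : (pert θ (fun v => v.1) (fun v => v.1 + v.2) (z i)).2 = (z i).2 :=
      congrArg Prod.snd hfix
    simp only [pert, add_sub_cancel_right] at h2
    rw [rho_fract_self θ _ hθdef.symm,
      rho_of_fract_zero hθ (by rcases hx with h | h <;> rw [h] <;> simp)] at h2
    linarith
  · exfalso
    push_neg at hx
    obtain ⟨hxne0, hxne1⟩ := hx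
    have hxIcc := (hv.1 i).1
    have hx0 : 0 < (z i).1 := lt_of_le_of_ne hxIcc.1 (Ne.symm hxne0)
    have hx1 : (z i).1 < 1 := lt_of_le_of_ne hxIcc.2 hxne1
    set θ := Int.fract ((z i).1) with hθdef
    have hfr : Int.fract ((z i).1) = (z i).1 := Int.fract_eq_self.2 ⟨hx0.le, hx1⟩
    have hθ : θ ≠ 0 := by rw [hθdef, hfr]; exact hxne0
    have hfix := master hv θ hθ (fun v => v.1) (fun v => v.1 + v.2)
      (fun m hm w w' h => pres_av θ (hcl m hm).1 (hcl m hm).2 w w' h) i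
    have h1 : (pert θ (fun v => v.1) (fun v => v.1 + v.2) (z i)).1 = (z i).1 :=
      congrArg Prod.fst hfix
    simp only [pert, sub_self] at h1
    rw [rho_zero hθ, rho_fract_self θ _ hθdef.symm] at h1
    linarith

lemma scheme_rook {M : Finset (ℤ × ℤ)} {q : ℕ} {z : Fin q → ℝ × ℝ} (hv : IsVertex M q z)
    (hcl : ∀ m ∈ M, m ≠ (0:ℤ×ℤ) ∧ (m.1 = 0 ∨ m.2 = 0)) (i : Fin q) :
    ((z i).1 = 0 ∨ (z i).1 = 1) ∧ ((z i).2 = 0 ∨ (z i).2 = 1) := by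
  constructor
  · by_contra hx
    push_neg at hx
    obtain ⟨hxne0, hxne1⟩ := hx
    have hxIcc := (hv.1 i).1
    have hx0 : 0 < (z i).1 := lt_of_le_of_ne hxIcc.1 (Ne.symm hxne0)
    have hx1 : (z i).1 < 1 := lt_of_le_of_ne hxIcc.2 hxne1
    set θ := Int.fract ((z i).1) with hθdef
    have hfr : Int.fract ((z i).1) = (z i).1 := Int.fract_eq_self.2 ⟨hx0.le, hx1⟩
    have hθ : θ ≠ 0 := by rw [hθdef, hfr]; exact hxne0
    have hfix := master hv θ hθ (fun v => v.1) (fun v => v.2)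
      (fun m hm w w' h => pres_rook θ (hcl m hm).1 (hcl m hm).2 w w' h) i
    have h1 : (pert θ (fun v => v.1) (fun v => v.2) (z i)).1 = (z i).1 :=
      congrArg Prod.fst hfix
    simp only [pert, sub_self] at h1
    rw [rho_zero hθ, rho_fract_self θ _ hθdef.symm] at h1
    linarith
  · by_contra hy
    push_neg at hy
    obtain ⟨hyne0, hyne1⟩ := hy
    have hyIcc := (hv.1 i).2
    have hy0 : 0 < (z i).2 := lt_of_le_of_ne hyIcc.1 (Ne.symm hyne0)
    have hy1 : (z i).2 < 1 := lt_of_le_of_ne hyIcc.2 hyne1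
    set θ := Int.fract ((z i).2) with hθdef
    have hfr : Int.fract ((z i).2) = (z i).2 := Int.fract_eq_self.2 ⟨hy0.le, hy1⟩
    have hθ : θ ≠ 0 := by rw [hθdef, hfr]; exact hyne0
    have hfix := master hv θ hθ (fun v => v.1) (fun v => v.2)
      (fun m hm w w' h => pres_rook θ (hcl m hm).1 (hcl m hm).2 w w' h) i
    have h2 : (pert θ (fun v => v.1) (fun v => v.2) (z i)).2 = (z i).2 :=
      congrArg Prod.snd hfix
    simp only [pert, sub_self] at h2
    rw [rho_zero hθ, rho_fract_self θ _ hθdef.symm] at h2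
    linarith
/-! ### Construction B : both diagonals present -/

lemma conB {M : Finset (ℤ × ℤ)} (hL : LHSP M) {m m' : ℤ × ℤ}
    (hm : m ∈ M) (hm' : m' ∈ M) (he : m.1 = m.2) (he' : m'.1 = -m'.2)
    (h0 : m ≠ 0) (h0' : m' ≠ 0) : False := by
  have hm2 : (m.2:ℝ) ≠ 0 := cast2_ne h0 he
  have hm2' : (m'.2:ℝ) ≠ 0 := cast2_ne' h0' he'
  have h1R : (m.1:ℝ) = (m.2:ℝ) := by exact_mod_cast he
  have h1R' : (m'.1:ℝ) = -(m'.2:ℝ) := by exact_mod_cast he'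
  set z : Fin 3 → ℝ × ℝ := ![(0,0), (1/2,1/2), (1,0)] with hzdef
  have hz0 : z 0 = (0,0) := rfl
  have hz1 : z 1 = (1/2,1/2) := rfl
  have hz2 : z 2 = (1,0) := rfl
  have hzall : ∀ i : Fin 3, z i = (0,0) ∨ z i = (1/2,1/2) ∨ z i = (1,0) := by
    intro i
    fin_cases i
    exacts [Or.inl hz0, Or.inr (Or.inl hz1), Or.inr (Or.inr hz2)]
  have hv : IsVertex M 3 z := by
    constructor
    · intro i
      rcases hzall i with h | h | h <;> rw [h] <;>
        exact ⟨⟨by norm_num, by norm_num⟩, by norm_num, by norm_num⟩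
    · apply Set.eq_of_subset_of_subset
      · intro w hw
        have e1 : (w 0).1 = 0 := hw {v | (v 0).1 = 0}
          ⟨Or.inr ⟨0, Or.inl rfl⟩, show (z 0).1 = 0 by rw [hz0]⟩
        have e2 : (w 0).2 = 0 := hw {v | (v 0).2 = 0}
          ⟨Or.inr ⟨0, Or.inr (Or.inr (Or.inl rfl))⟩, show (z 0).2 = 0 by rw [hz0]⟩
        have e3 : (w 2).1 = 1 := hw {v | (v 2).1 = 1}
          ⟨Or.inr ⟨2, Or.inr (Or.inl rfl)⟩, show (z 2).1 = 1 by rw [hz2]⟩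
        have e4 : (w 2).2 = 0 := hw {v | (v 2).2 = 0}
          ⟨Or.inr ⟨2, Or.inr (Or.inr (Or.inl rfl))⟩, show (z 2).2 = 0 by rw [hz2]⟩
        have e5 : ((w 1).1 - (w 0).1) * (m.2:ℝ) - ((w 1).2 - (w 0).2) * (m.1:ℝ) = 0 :=
          hw {v | ((v 1).1 - (v 0).1) * (m.2:ℝ) - ((v 1).2 - (v 0).2) * (m.1:ℝ) = 0}
          ⟨Or.inl ⟨m, hm, 0, 1, by decide, rfl⟩, by
            show ((z 1).1 - (z 0).1) * (m.2:ℝ) - ((z 1).2 - (z 0).2) * (m.1:ℝ) = 0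
            rw [hz0, hz1]
            linear_combination (-(1:ℝ)/2) * h1R⟩
        have e6 : ((w 2).1 - (w 1).1) * (m'.2:ℝ) - ((w 2).2 - (w 1).2) * (m'.1:ℝ) = 0 :=
          hw {v | ((v 2).1 - (v 1).1) * (m'.2:ℝ) - ((v 2).2 - (v 1).2) * (m'.1:ℝ) = 0}
          ⟨Or.inl ⟨m', hm', 1, 2, by decide, rfl⟩, by
            show ((z 2).1 - (z 1).1) * (m'.2:ℝ) - ((z 2).2 - (z 1).2) * (m'.1:ℝ) = 0
            rw [hz1, hz2]
            linear_combination ((1:ℝ)/2) * h1R'⟩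
        -- solve the linear system
        have hx1 : (w 1).1 = (w 1).2 := by
          have h' : ((w 1).1 - (w 1).2) * (m.2:ℝ) = 0 := by
            linear_combination e5 + (w 1).2 * h1R + ((m.2:ℝ)) * e1 - (m.1:ℝ) * e2
          rcases mul_eq_zero.mp h' with h'' | h''
          · linarith
          · exact absurd h'' hm2
        have hx2 : (w 1).1 + (w 1).2 = 1 := by
          have h' : (1 - (w 1).1 - (w 1).2) * (m'.2:ℝ) = 0 := by
            linear_combination e6 - (w 1).2 * h1R' - (m'.2:ℝ) * e3 + (m'.1:ℝ) * e4
          rcases mul_eq_zero.mp h' with h'' | h''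
          · linarith
          · exact absurd h'' hm2'
        show w = z
        funext i
        fin_cases i
        · exact Prod.ext_iff.mpr ⟨e1, e2⟩
        · exact Prod.ext_iff.mpr ⟨by show (w 1).1 = 1/2; linarith, by show (w 1).2 = 1/2; linarith⟩
        · exact Prod.ext_iff.mpr ⟨e3, e4⟩
      · intro w hw
        rw [Set.mem_singleton_iff] at hw
        subst hw
        intro H hH
        exact hH.2
  have := (hL 3 (by norm_num) z hv 1).1
  rw [hz1] at this
  norm_num at this
/-! ### Construction C : three orthogonal-plus-one-diagonal classes -/

lemma conC {M : Finset (ℤ × ℤ)} (hL : LHSP M) {mh mv md : ℤ × ℤ}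
    (hmh : mh ∈ M) (hmv : mv ∈ M) (hmd : md ∈ M)
    (eh : mh.2 = 0) (ev : mv.1 = 0) (ed : md.1 = md.2)
    (h0h : mh ≠ 0) (h0v : mv ≠ 0) (h0d : md ≠ 0) : False := by
  have hh1 : (mh.1:ℝ) ≠ 0 := cast1_ne h0h eh
  have hv2 : (mv.2:ℝ) ≠ 0 := cast2_ne'' h0v ev
  have hd2 : (md.2:ℝ) ≠ 0 := cast2_ne h0d ed
  have hh2R : (mh.2:ℝ) = 0 := by exact_mod_cast eh
  have hv1R : (mv.1:ℝ) = 0 := by exact_mod_cast ev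
  have hd1R : (md.1:ℝ) = (md.2:ℝ) := by exact_mod_cast ed
  set z : Fin 4 → ℝ × ℝ := ![(0,0), (0,1/2), (1/2,1), (1/2,1/2)] with hzdef
  have hz0 : z 0 = (0,0) := rfl
  have hz1 : z 1 = (0,1/2) := rfl
  have hz2 : z 2 = (1/2,1) := rfl
  have hz3 : z 3 = (1/2,1/2) := rfl
  have hzall : ∀ i : Fin 4, z i = (0,0) ∨ z i = (0,1/2) ∨ z i = (1/2,1) ∨ z i = (1/2,1/2) := by
    intro i
    fin_cases i
    exacts [Or.inl hz0, Or.inr (Or.inl hz1), Or.inr (Or.inr (Or.inl hz2)),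
      Or.inr (Or.inr (Or.inr hz3))]
  have hv : IsVertex M 4 z := by
    constructor
    · intro i
      rcases hzall i with h | h | h | h <;> rw [h] <;>
        exact ⟨⟨by norm_num, by norm_num⟩, by norm_num, by norm_num⟩
    · apply Set.eq_of_subset_of_subset
      · intro w hw
        have e1 : (w 0).1 = 0 := hw {v | (v 0).1 = 0}
          ⟨Or.inr ⟨0, Or.inl rfl⟩, show (z 0).1 = 0 by rw [hz0]⟩
        have e2 : (w 0).2 = 0 := hw {v | (v 0).2 = 0}
          ⟨Or.inr ⟨0, Or.inr (Or.inr (Or.inl rfl))⟩, show (z 0).2 = 0 by rw [hz0]⟩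
        have e3 : (w 1).1 = 0 := hw {v | (v 1).1 = 0}
          ⟨Or.inr ⟨1, Or.inl rfl⟩, show (z 1).1 = 0 by rw [hz1]⟩
        have e4 : (w 2).2 = 1 := hw {v | (v 2).2 = 1}
          ⟨Or.inr ⟨2, Or.inr (Or.inr (Or.inr rfl))⟩, show (z 2).2 = 1 by rw [hz2]⟩
        have e5 : ((w 3).1 - (w 0).1) * (md.2:ℝ) - ((w 3).2 - (w 0).2) * (md.1:ℝ) = 0 :=
          hw {v | ((v 3).1 - (v 0).1) * (md.2:ℝ) - ((v 3).2 - (v 0).2) * (md.1:ℝ) = 0}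
          ⟨Or.inl ⟨md, hmd, 0, 3, by decide, rfl⟩, by
            show ((z 3).1 - (z 0).1) * (md.2:ℝ) - ((z 3).2 - (z 0).2) * (md.1:ℝ) = 0
            rw [hz0, hz3]
            linear_combination (-(1:ℝ)/2) * hd1R⟩
        have e6 : ((w 2).1 - (w 1).1) * (md.2:ℝ) - ((w 2).2 - (w 1).2) * (md.1:ℝ) = 0 :=
          hw {v | ((v 2).1 - (v 1).1) * (md.2:ℝ) - ((v 2).2 - (v 1).2) * (md.1:ℝ) = 0}
          ⟨Or.inl ⟨md, hmd, 1, 2, by decide, rfl⟩, by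
            show ((z 2).1 - (z 1).1) * (md.2:ℝ) - ((z 2).2 - (z 1).2) * (md.1:ℝ) = 0
            rw [hz1, hz2]
            linear_combination (-(1:ℝ)/2) * hd1R⟩
        have e7 : ((w 3).1 - (w 1).1) * (mh.2:ℝ) - ((w 3).2 - (w 1).2) * (mh.1:ℝ) = 0 :=
          hw {v | ((v 3).1 - (v 1).1) * (mh.2:ℝ) - ((v 3).2 - (v 1).2) * (mh.1:ℝ) = 0}
          ⟨Or.inl ⟨mh, hmh, 1, 3, by decide, rfl⟩, by
            show ((z 3).1 - (z 1).1) * (mh.2:ℝ) - ((z 3).2 - (z 1).2) * (mh.1:ℝ) = 0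
            rw [hz1, hz3]
            linear_combination ((1:ℝ)/2) * hh2R⟩
        have e8 : ((w 3).1 - (w 2).1) * (mv.2:ℝ) - ((w 3).2 - (w 2).2) * (mv.1:ℝ) = 0 :=
          hw {v | ((v 3).1 - (v 2).1) * (mv.2:ℝ) - ((v 3).2 - (v 2).2) * (mv.1:ℝ) = 0}
          ⟨Or.inl ⟨mv, hmv, 2, 3, by decide, rfl⟩, by
            show ((z 3).1 - (z 2).1) * (mv.2:ℝ) - ((z 3).2 - (z 2).2) * (mv.1:ℝ) = 0
            rw [hz2, hz3]
            linear_combination ((1:ℝ)/2) * hv1R⟩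
        -- solve the system
        have hA : (w 3).1 = (w 3).2 := by
          have h' : ((w 3).1 - (w 3).2) * (md.2:ℝ) = 0 := by
            linear_combination e5 + (w 3).2 * hd1R + (md.2:ℝ) * e1 - (md.1:ℝ) * e2
          rcases mul_eq_zero.mp h' with h'' | h''
          · linarith
          · exact absurd h'' hd2
        have hB : (w 2).1 = 1 - (w 1).2 := by
          have h' : ((w 2).1 - (1 - (w 1).2)) * (md.2:ℝ) = 0 := by
            linear_combination e6 + (md.2:ℝ) * e3 + (md.1:ℝ) * e4 + (1 - (w 1).2) * hd1R
          rcases mul_eq_zero.mp h' with h'' | h''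
          · linarith
          · exact absurd h'' hd2
        have hC : (w 3).2 = (w 1).2 := by
          have h' : ((w 3).2 - (w 1).2) * (mh.1:ℝ) = 0 := by
            linear_combination -e7 + ((w 3).1 - (w 1).1) * hh2R
          rcases mul_eq_zero.mp h' with h'' | h''
          · linarith
          · exact absurd h'' hh1
        have hD : (w 3).1 = (w 2).1 := by
          have h' : ((w 3).1 - (w 2).1) * (mv.2:ℝ) = 0 := by
            linear_combination e8 + ((w 3).2 - (w 2).2) * hv1R
          rcases mul_eq_zero.mp h' with h'' | h''
          · linarith
          · exact absurd h'' hv2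
        show w = z
        funext i
        fin_cases i
        · exact Prod.ext_iff.mpr ⟨e1, e2⟩
        · exact Prod.ext_iff.mpr ⟨by show (w 1).1 = 0; exact e3, by show (w 1).2 = 1/2; linarith⟩
        · exact Prod.ext_iff.mpr ⟨by show (w 2).1 = 1/2; linarith, by show (w 2).2 = 1; exact e4⟩
        · exact Prod.ext_iff.mpr ⟨by show (w 3).1 = 1/2; linarith, by show (w 3).2 = 1/2; linarith⟩
      · intro w hw
        rw [Set.mem_singleton_iff] at hw
        subst hw
        intro H hH
        exact hH.2
  have := (hL 4 (by norm_num) z hv 1).2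
  rw [hz1] at this
  norm_num at this

lemma conC' {M : Finset (ℤ × ℤ)} (hL : LHSP M) {mh mv ma : ℤ × ℤ}
    (hmh : mh ∈ M) (hmv : mv ∈ M) (hma : ma ∈ M)
    (eh : mh.2 = 0) (ev : mv.1 = 0) (ea : ma.1 = -ma.2)
    (h0h : mh ≠ 0) (h0v : mv ≠ 0) (h0a : ma ≠ 0) : False := by
  have hh1 : (mh.1:ℝ) ≠ 0 := cast1_ne h0h eh
  have hv2 : (mv.2:ℝ) ≠ 0 := cast2_ne'' h0v ev
  have ha2 : (ma.2:ℝ) ≠ 0 := cast2_ne' h0a ea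
  have hh2R : (mh.2:ℝ) = 0 := by exact_mod_cast eh
  have hv1R : (mv.1:ℝ) = 0 := by exact_mod_cast ev
  have ha1R : (ma.1:ℝ) = -(ma.2:ℝ) := by exact_mod_cast ea
  set z : Fin 4 → ℝ × ℝ := ![(1,0), (1,1/2), (1/2,1), (1/2,1/2)] with hzdef
  have hz0 : z 0 = (1,0) := rfl
  have hz1 : z 1 = (1,1/2) := rfl
  have hz2 : z 2 = (1/2,1) := rfl
  have hz3 : z 3 = (1/2,1/2) := rfl
  have hzall : ∀ i : Fin 4, z i = (1,0) ∨ z i = (1,1/2) ∨ z i = (1/2,1) ∨ z i = (1/2,1/2) := by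
    intro i
    fin_cases i
    exacts [Or.inl hz0, Or.inr (Or.inl hz1), Or.inr (Or.inr (Or.inl hz2)),
      Or.inr (Or.inr (Or.inr hz3))]
  have hv : IsVertex M 4 z := by
    constructor
    · intro i
      rcases hzall i with h | h | h | h <;> rw [h] <;>
        exact ⟨⟨by norm_num, by norm_num⟩, by norm_num, by norm_num⟩
    · apply Set.eq_of_subset_of_subset
      · intro w hw
        have e1 : (w 0).1 = 1 := hw {v | (v 0).1 = 1}
          ⟨Or.inr ⟨0, Or.inr (Or.inl rfl)⟩, show (z 0).1 = 1 by rw [hz0]⟩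
        have e2 : (w 0).2 = 0 := hw {v | (v 0).2 = 0}
          ⟨Or.inr ⟨0, Or.inr (Or.inr (Or.inl rfl))⟩, show (z 0).2 = 0 by rw [hz0]⟩
        have e3 : (w 1).1 = 1 := hw {v | (v 1).1 = 1}
          ⟨Or.inr ⟨1, Or.inr (Or.inl rfl)⟩, show (z 1).1 = 1 by rw [hz1]⟩
        have e4 : (w 2).2 = 1 := hw {v | (v 2).2 = 1}
          ⟨Or.inr ⟨2, Or.inr (Or.inr (Or.inr rfl))⟩, show (z 2).2 = 1 by rw [hz2]⟩
        have e5 : ((w 3).1 - (w 0).1) * (ma.2:ℝ) - ((w 3).2 - (w 0).2) * (ma.1:ℝ) = 0 :=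
          hw {v | ((v 3).1 - (v 0).1) * (ma.2:ℝ) - ((v 3).2 - (v 0).2) * (ma.1:ℝ) = 0}
          ⟨Or.inl ⟨ma, hma, 0, 3, by decide, rfl⟩, by
            show ((z 3).1 - (z 0).1) * (ma.2:ℝ) - ((z 3).2 - (z 0).2) * (ma.1:ℝ) = 0
            rw [hz0, hz3]
            linear_combination (-(1:ℝ)/2) * ha1R⟩
        have e6 : ((w 2).1 - (w 1).1) * (ma.2:ℝ) - ((w 2).2 - (w 1).2) * (ma.1:ℝ) = 0 :=
          hw {v | ((v 2).1 - (v 1).1) * (ma.2:ℝ) - ((v 2).2 - (v 1).2) * (ma.1:ℝ) = 0}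
          ⟨Or.inl ⟨ma, hma, 1, 2, by decide, rfl⟩, by
            show ((z 2).1 - (z 1).1) * (ma.2:ℝ) - ((z 2).2 - (z 1).2) * (ma.1:ℝ) = 0
            rw [hz1, hz2]
            linear_combination (-(1:ℝ)/2) * ha1R⟩
        have e7 : ((w 3).1 - (w 1).1) * (mh.2:ℝ) - ((w 3).2 - (w 1).2) * (mh.1:ℝ) = 0 :=
          hw {v | ((v 3).1 - (v 1).1) * (mh.2:ℝ) - ((v 3).2 - (v 1).2) * (mh.1:ℝ) = 0}
          ⟨Or.inl ⟨mh, hmh, 1, 3, by decide, rfl⟩, by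
            show ((z 3).1 - (z 1).1) * (mh.2:ℝ) - ((z 3).2 - (z 1).2) * (mh.1:ℝ) = 0
            rw [hz1, hz3]
            linear_combination (-(1:ℝ)/2) * hh2R⟩
        have e8 : ((w 3).1 - (w 2).1) * (mv.2:ℝ) - ((w 3).2 - (w 2).2) * (mv.1:ℝ) = 0 :=
          hw {v | ((v 3).1 - (v 2).1) * (mv.2:ℝ) - ((v 3).2 - (v 2).2) * (mv.1:ℝ) = 0}
          ⟨Or.inl ⟨mv, hmv, 2, 3, by decide, rfl⟩, by
            show ((z 3).1 - (z 2).1) * (mv.2:ℝ) - ((z 3).2 - (z 2).2) * (mv.1:ℝ) = 0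
            rw [hz2, hz3]
            linear_combination ((1:ℝ)/2) * hv1R⟩
        have hA : (w 3).1 + (w 3).2 = 1 := by
          have h' : ((w 3).1 + (w 3).2 - 1) * (ma.2:ℝ) = 0 := by
            linear_combination e5 + (ma.2:ℝ) * e1 - (ma.1:ℝ) * e2 + (w 3).2 * ha1R
          rcases mul_eq_zero.mp h' with h'' | h''
          · linarith
          · exact absurd h'' ha2
        have hB : (w 2).1 = (w 1).2 := by
          have h' : ((w 2).1 - (w 1).2) * (ma.2:ℝ) = 0 := by
            linear_combination e6 + (ma.2:ℝ) * e3 + (ma.1:ℝ) * e4 + (1 - (w 1).2) * ha1R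
          rcases mul_eq_zero.mp h' with h'' | h''
          · linarith
          · exact absurd h'' ha2
        have hC : (w 3).2 = (w 1).2 := by
          have h' : ((w 3).2 - (w 1).2) * (mh.1:ℝ) = 0 := by
            linear_combination -e7 + ((w 3).1 - (w 1).1) * hh2R
          rcases mul_eq_zero.mp h' with h'' | h''
          · linarith
          · exact absurd h'' hh1
        have hD : (w 3).1 = (w 2).1 := by
          have h' : ((w 3).1 - (w 2).1) * (mv.2:ℝ) = 0 := by
            linear_combination e8 + ((w 3).2 - (w 2).2) * hv1R
          rcases mul_eq_zero.mp h' with h'' | h''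
          · linarith
          · exact absurd h'' hv2
        show w = z
        funext i
        fin_cases i
        · exact Prod.ext_iff.mpr ⟨e1, e2⟩
        · exact Prod.ext_iff.mpr ⟨by show (w 1).1 = 1; exact e3, by show (w 1).2 = 1/2; linarith⟩
        · exact Prod.ext_iff.mpr ⟨by show (w 2).1 = 1/2; linarith, by show (w 2).2 = 1; exact e4⟩
        · exact Prod.ext_iff.mpr ⟨by show (w 3).1 = 1/2; linarith, by show (w 3).2 = 1/2; linarith⟩
      · intro w hw
        rw [Set.mem_singleton_iff] at hw
        subst hw
        intro H hH
        exact hH.2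
  have := (hL 4 (by norm_num) z hv 1).2
  rw [hz1] at this
  norm_num at this
/-! ### Construction A : a move with an exotic slope -/

lemma conA {M : Finset (ℤ × ℤ)} (hL : LHSP M) {m : ℤ × ℤ} (hm : m ∈ M)
    (hm2 : (m.2:ℝ) ≠ 0) {A B x₂ : ℝ} (hA : A = 0 ∨ A = 1) (hB : B = 0 ∨ B = 1)
    (heq : x₂ * (m.2:ℝ) - (B - A) * (m.1:ℝ) = 0) (hx0 : 0 < x₂) (hx1 : x₂ < 1) : False := by
  set z : Fin 2 → ℝ × ℝ := ![(0, A), (x₂, B)] with hzdef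
  have hz0 : z 0 = (0, A) := rfl
  have hz1 : z 1 = (x₂, B) := rfl
  have hzall : ∀ i : Fin 2, z i = (0, A) ∨ z i = (x₂, B) := by
    intro i
    fin_cases i
    exacts [Or.inl hz0, Or.inr hz1]
  have hAmem : A ∈ Set.Icc (0:ℝ) 1 := by rcases hA with h | h <;> rw [h] <;> norm_num
  have hBmem : B ∈ Set.Icc (0:ℝ) 1 := by rcases hB with h | h <;> rw [h] <;> norm_num
  have hv : IsVertex M 2 z := by
    constructor
    · intro i
      rcases hzall i with h | h <;> rw [h]
      · exact ⟨⟨by norm_num, by norm_num⟩, hAmem⟩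
      · exact ⟨⟨hx0.le, hx1.le⟩, hBmem⟩
    · apply Set.eq_of_subset_of_subset
      · intro w hw
        have e1 : (w 0).1 = 0 := hw {v | (v 0).1 = 0}
          ⟨Or.inr ⟨0, Or.inl rfl⟩, show (z 0).1 = 0 by rw [hz0]⟩
        have e2 : (w 0).2 = A := by
          rcases hA with h | h
          · rw [h]
            exact hw {v | (v 0).2 = 0}
              ⟨Or.inr ⟨0, Or.inr (Or.inr (Or.inl rfl))⟩, show (z 0).2 = 0 by rw [hz0]; exact h⟩
          · rw [h]
            exact hw {v | (v 0).2 = 1}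
              ⟨Or.inr ⟨0, Or.inr (Or.inr (Or.inr rfl))⟩, show (z 0).2 = 1 by rw [hz0]; exact h⟩
        have e3 : (w 1).2 = B := by
          rcases hB with h | h
          · rw [h]
            exact hw {v | (v 1).2 = 0}
              ⟨Or.inr ⟨1, Or.inr (Or.inr (Or.inl rfl))⟩, show (z 1).2 = 0 by rw [hz1]; exact h⟩
          · rw [h]
            exact hw {v | (v 1).2 = 1}
              ⟨Or.inr ⟨1, Or.inr (Or.inr (Or.inr rfl))⟩, show (z 1).2 = 1 by rw [hz1]; exact h⟩
        have e4 : ((w 1).1 - (w 0).1) * (m.2:ℝ) - ((w 1).2 - (w 0).2) * (m.1:ℝ) = 0 :=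
          hw {v | ((v 1).1 - (v 0).1) * (m.2:ℝ) - ((v 1).2 - (v 0).2) * (m.1:ℝ) = 0}
          ⟨Or.inl ⟨m, hm, 0, 1, by decide, rfl⟩, by
            show ((z 1).1 - (z 0).1) * (m.2:ℝ) - ((z 1).2 - (z 0).2) * (m.1:ℝ) = 0
            rw [hz0, hz1]
            linear_combination heq⟩
        have hx : (w 1).1 = x₂ := by
          have h' : ((w 1).1 - x₂) * (m.2:ℝ) = 0 := by
            linear_combination e4 - heq + (m.2:ℝ) * e1 + (m.1:ℝ) * e3 - (m.1:ℝ) * e2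
          rcases mul_eq_zero.mp h' with h'' | h''
          · linarith
          · exact absurd h'' hm2
        show w = z
        funext i
        fin_cases i
        · exact Prod.ext_iff.mpr ⟨e1, e2⟩
        · exact Prod.ext_iff.mpr ⟨hx, e3⟩
      · intro w hw
        rw [Set.mem_singleton_iff] at hw
        subst hw
        intro H hH
        exact hH.2
  have := (hL 2 (by norm_num) z hv 1).1
  rw [hz1] at this
  rcases this with h | h
  · exact absurd h (ne_of_gt hx0)
  · exact absurd h (ne_of_lt hx1)

lemma conA' {M : Finset (ℤ × ℤ)} (hL : LHSP M) {m : ℤ × ℤ} (hm : m ∈ M)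
    (hm1 : (m.1:ℝ) ≠ 0) {A B y₂ : ℝ} (hA : A = 0 ∨ A = 1) (hB : B = 0 ∨ B = 1)
    (heq : (B - A) * (m.2:ℝ) - y₂ * (m.1:ℝ) = 0) (hy0 : 0 < y₂) (hy1 : y₂ < 1) : False := by
  set z : Fin 2 → ℝ × ℝ := ![(A, 0), (B, y₂)] with hzdef
  have hz0 : z 0 = (A, 0) := rfl
  have hz1 : z 1 = (B, y₂) := rfl
  have hzall : ∀ i : Fin 2, z i = (A, 0) ∨ z i = (B, y₂) := by
    intro i
    fin_cases i
    exacts [Or.inl hz0, Or.inr hz1]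
  have hAmem : A ∈ Set.Icc (0:ℝ) 1 := by rcases hA with h | h <;> rw [h] <;> norm_num
  have hBmem : B ∈ Set.Icc (0:ℝ) 1 := by rcases hB with h | h <;> rw [h] <;> norm_num
  have hv : IsVertex M 2 z := by
    constructor
    · intro i
      rcases hzall i with h | h <;> rw [h]
      · exact ⟨hAmem, by norm_num, by norm_num⟩
      · exact ⟨hBmem, hy0.le, hy1.le⟩
    · apply Set.eq_of_subset_of_subset
      · intro w hw
        have e1 : (w 0).2 = 0 := hw {v | (v 0).2 = 0}
          ⟨Or.inr ⟨0, Or.inr (Or.inr (Or.inl rfl))⟩, show (z 0).2 = 0 by rw [hz0]⟩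
        have e2 : (w 0).1 = A := by
          rcases hA with h | h
          · rw [h]
            exact hw {v | (v 0).1 = 0}
              ⟨Or.inr ⟨0, Or.inl rfl⟩, show (z 0).1 = 0 by rw [hz0]; exact h⟩
          · rw [h]
            exact hw {v | (v 0).1 = 1}
              ⟨Or.inr ⟨0, Or.inr (Or.inl rfl)⟩, show (z 0).1 = 1 by rw [hz0]; exact h⟩
        have e3 : (w 1).1 = B := by
          rcases hB with h | h
          · rw [h]
            exact hw {v | (v 1).1 = 0}
              ⟨Or.inr ⟨1, Or.inl rfl⟩, show (z 1).1 = 0 by rw [hz1]; exact h⟩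
          · rw [h]
            exact hw {v | (v 1).1 = 1}
              ⟨Or.inr ⟨1, Or.inr (Or.inl rfl)⟩, show (z 1).1 = 1 by rw [hz1]; exact h⟩
        have e4 : ((w 1).1 - (w 0).1) * (m.2:ℝ) - ((w 1).2 - (w 0).2) * (m.1:ℝ) = 0 :=
          hw {v | ((v 1).1 - (v 0).1) * (m.2:ℝ) - ((v 1).2 - (v 0).2) * (m.1:ℝ) = 0}
          ⟨Or.inl ⟨m, hm, 0, 1, by decide, rfl⟩, by
            show ((z 1).1 - (z 0).1) * (m.2:ℝ) - ((z 1).2 - (z 0).2) * (m.1:ℝ) = 0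
            rw [hz0, hz1]
            linear_combination heq⟩
        have hy : (w 1).2 = y₂ := by
          have h' : ((w 1).2 - y₂) * (m.1:ℝ) = 0 := by
            linear_combination -e4 + heq + (m.2:ℝ) * e3 - (m.2:ℝ) * e2 + (m.1:ℝ) * e1
          rcases mul_eq_zero.mp h' with h'' | h''
          · linarith
          · exact absurd h'' hm1
        show w = z
        funext i
        fin_cases i
        · exact Prod.ext_iff.mpr ⟨e2, e1⟩
        · exact Prod.ext_iff.mpr ⟨e3, hy⟩
      · intro w hw
        rw [Set.mem_singleton_iff] at hw
        subst hw
        intro H hH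
        exact hH.2
  have := (hL 2 (by norm_num) z hv 1).2
  rw [hz1] at this
  rcases this with h | h
  · exact absurd h (ne_of_gt hy0)
  · exact absurd h (ne_of_lt hy1)
/-! ### Classification of moves into four classes -/

def clf (m : ℤ × ℤ) : ℕ :=
  if m.2 = 0 then 0 else if m.1 = 0 then 1 else if m.1 = m.2 then 2 else 3

lemma clf_mem (m : ℤ × ℤ) : clf m ∈ ({0,1,2,3} : Finset ℕ) := by
  unfold clf; split_ifs <;> simp

lemma clf_eq0 {m : ℤ × ℤ} (h : clf m = 0) : m.2 = 0 := by
  unfold clf at h; split_ifs at h with h1 h2 h3 <;> first | exact h1 | omega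

lemma clf_eq1 {m : ℤ × ℤ} (h : clf m = 1) : m.2 ≠ 0 ∧ m.1 = 0 := by
  unfold clf at h; split_ifs at h with h1 h2 h3 <;> first | exact ⟨h1, h2⟩ | omega

lemma clf_eq2 {m : ℤ × ℤ} (h : clf m = 2) : m.2 ≠ 0 ∧ m.1 ≠ 0 ∧ m.1 = m.2 := by
  unfold clf at h; split_ifs at h with h1 h2 h3 <;> first | exact ⟨h1, h2, h3⟩ | omega

lemma clf_eq3 {m : ℤ × ℤ} (h : clf m = 3) : m.2 ≠ 0 ∧ m.1 ≠ 0 ∧ m.1 ≠ m.2 := by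
  unfold clf at h; split_ifs at h with h1 h2 h3 <;> first | exact ⟨h1, h2, h3⟩ | omega

lemma para_of (a b : ℤ × ℤ) {r : ℚ} (h1 : (b.1:ℚ) = r * a.1) (h2 : (b.2:ℚ) = r * a.2) :
    IntPara a b := Or.inl ⟨r, h1, h2⟩

theorem stmt3' (M : Finset (ℤ × ℤ)) (hM : IsMoveSet M) (hne : M.Nonempty) :
    (LHSP M) ↔
      ((∀ m ∈ M, m.2 = 0 ∨ m.1 = 0 ∨ m.1 = m.2 ∨ m.1 = -m.2) ∧
        M.card ≤ 2 ∧
        ¬((∃ m ∈ M, m.1 = m.2) ∧ (∃ m' ∈ M, m'.1 = -m'.2))) := by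
  have hbasic := hM.1
  constructor
  · intro hL
    have hc1 : ∀ m ∈ M, m.2 = 0 ∨ m.1 = 0 ∨ m.1 = m.2 ∨ m.1 = -m.2 := by
      intro m hm
      by_contra hcon
      push_neg at hcon
      obtain ⟨h2, h1, hne1, hne2⟩ := hcon
      have h2R : (m.2:ℝ) ≠ 0 := by exact_mod_cast h2
      have h1R : (m.1:ℝ) ≠ 0 := by exact_mod_cast h1
      have habs : |m.1| ≠ |m.2| := by
        intro h
        rcases abs_eq_abs.mp h with h | h
        exacts [hne1 h, hne2 h]
      rcases lt_or_gt_of_ne habs with hlt | hgt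
      · -- |m.1| < |m.2| : use conA
        have hltR : |(m.1:ℝ)| < |(m.2:ℝ)| := by
          rw [← Int.cast_abs, ← Int.cast_abs]; exact_mod_cast hlt
        have hrabs : |(m.1:ℝ)/(m.2:ℝ)| < 1 := by
          rw [abs_div]
          exact (div_lt_one (abs_pos.mpr h2R)).mpr hltR
        have hmul : ((m.1:ℝ)/(m.2:ℝ)) * (m.2:ℝ) = (m.1:ℝ) := div_mul_cancel₀ _ h2R
        have hr0 : (m.1:ℝ)/(m.2:ℝ) ≠ 0 := div_ne_zero h1R h2R
        rcases lt_or_gt_of_ne hr0 with hrneg | hrpos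
        · refine conA hL hm h2R (Or.inr rfl) (Or.inl rfl)
            (show (-((m.1:ℝ)/(m.2:ℝ))) * (m.2:ℝ) - ((0:ℝ) - 1) * (m.1:ℝ) = 0 by
              linear_combination -hmul)
            (by linarith) ?_
          rw [abs_of_neg hrneg] at hrabs
          linarith
        · refine conA hL hm h2R (Or.inl rfl) (Or.inr rfl)
            (show ((m.1:ℝ)/(m.2:ℝ)) * (m.2:ℝ) - ((1:ℝ) - 0) * (m.1:ℝ) = 0 by
              linear_combination hmul)
            hrpos ?_
          rw [abs_of_pos hrpos] at hrabs
          linarith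
      · -- |m.2| < |m.1| : use conA'
        have hltR : |(m.2:ℝ)| < |(m.1:ℝ)| := by
          rw [← Int.cast_abs, ← Int.cast_abs]; exact_mod_cast hgt
        have hrabs : |(m.2:ℝ)/(m.1:ℝ)| < 1 := by
          rw [abs_div]
          exact (div_lt_one (abs_pos.mpr h1R)).mpr hltR
        have hmul : ((m.2:ℝ)/(m.1:ℝ)) * (m.1:ℝ) = (m.2:ℝ) := div_mul_cancel₀ _ h1R
        have hr0 : (m.2:ℝ)/(m.1:ℝ) ≠ 0 := div_ne_zero h2R h1R
        rcases lt_or_gt_of_ne hr0 with hrneg | hrpos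
        · refine conA' hL hm h1R (Or.inr rfl) (Or.inl rfl)
            (show ((0:ℝ) - 1) * (m.2:ℝ) - (-((m.2:ℝ)/(m.1:ℝ))) * (m.1:ℝ) = 0 by
              linear_combination hmul)
            (by linarith) ?_
          rw [abs_of_neg hrneg] at hrabs
          linarith
        · refine conA' hL hm h1R (Or.inl rfl) (Or.inr rfl)
            (show ((1:ℝ) - 0) * (m.2:ℝ) - ((m.2:ℝ)/(m.1:ℝ)) * (m.1:ℝ) = 0 by
              linear_combination -hmul)
            hrpos ?_
          rw [abs_of_pos hrpos] at hrabs
          linarith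
    have hc3 : ¬((∃ m ∈ M, m.1 = m.2) ∧ (∃ m' ∈ M, m'.1 = -m'.2)) := by
      rintro ⟨⟨m, hm, he⟩, ⟨m', hm', he'⟩⟩
      exact conB hL hm hm' he he' (hbasic m hm).1 (hbasic m' hm').1
    refine ⟨hc1, ?_, hc3⟩
    by_contra hcard
    push_neg at hcard
    -- the class function is injective on M
    have hinj : Set.InjOn clf M := by
      intro a ha b hb hab
      by_contra hne
      apply hM.2 a ha b hb hne
      have hA := hbasic a ha
      have hB := hbasic b hb
      have hmem := clf_mem a
      simp only [Finset.mem_insert, Finset.mem_singleton] at hmem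
      rcases hmem with h0 | h0 | h0 | h0
      · have pa := clf_eq0 h0
        have pb := clf_eq0 (hab ▸ h0 : clf b = 0)
        have ha1 : (a.1:ℚ) ≠ 0 := by
          have : a.1 ≠ 0 := by
            intro hc
            exact hA.1 (Prod.ext_iff.mpr ⟨by simp [hc], by simp [pa]⟩)
          exact_mod_cast this
        refine para_of a b (r := (b.1:ℚ)/(a.1:ℚ)) (by field_simp) ?_
        rw [pa, pb]; simp
      · have pa := clf_eq1 h0
        have pb := clf_eq1 (hab ▸ h0 : clf b = 1)
        have ha2 : (a.2:ℚ) ≠ 0 := by exact_mod_cast pa.1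
        refine para_of a b (r := (b.2:ℚ)/(a.2:ℚ)) ?_ (by field_simp)
        rw [pa.2, pb.2]; simp
      · have pa := clf_eq2 h0
        have pb := clf_eq2 (hab ▸ h0 : clf b = 2)
        have ha1 : (a.1:ℚ) ≠ 0 := by exact_mod_cast pa.2.1
        refine para_of a b (r := (b.1:ℚ)/(a.1:ℚ)) (by field_simp) ?_
        have e1 : (a.2:ℚ) = (a.1:ℚ) := by exact_mod_cast pa.2.2.symm
        have e2 : (b.2:ℚ) = (b.1:ℚ) := by exact_mod_cast pb.2.2.symm
        rw [e1, e2]; field_simp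
      · have pa := clf_eq3 h0
        have pb := clf_eq3 (hab ▸ h0 : clf b = 3)
        have ha1 : (a.1:ℚ) ≠ 0 := by exact_mod_cast pa.2.1
        have hea : a.1 = -a.2 := by
          rcases hc1 a ha with h | h | h | h
          · exact absurd h pa.1
          · exact absurd h pa.2.1
          · exact absurd h pa.2.2
          · exact h
        have heb : b.1 = -b.2 := by
          rcases hc1 b hb with h | h | h | h
          · exact absurd h pb.1
          · exact absurd h pb.2.1
          · exact absurd h pb.2.2
          · exact h
        refine para_of a b (r := (b.1:ℚ)/(a.1:ℚ)) (by field_simp) ?_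
        have e1 : (a.1:ℚ) = -(a.2:ℚ) := by exact_mod_cast hea
        have e2 : (b.1:ℚ) = -(b.2:ℚ) := by exact_mod_cast heb
        have ha2 : (a.2:ℚ) ≠ 0 := by exact_mod_cast pa.1
        field_simp
        linear_combination (b.2:ℚ) * e1 - (a.2:ℚ) * e2
    have hcardim : 2 < (M.image clf).card := by
      rwa [Finset.card_image_of_injOn hinj]
    have him : (M.image clf) ⊆ ({0,1,2,3} : Finset ℕ) := by
      intro x hx
      obtain ⟨m, _, rfl⟩ := Finset.mem_image.mp hx
      exact clf_mem m
    -- extraction helpers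
    have hget : ∀ k ∈ M.image clf, ∃ m ∈ M, clf m = k := by
      intro k hk
      obtain ⟨m, hm, he⟩ := Finset.mem_image.mp hk
      exact ⟨m, hm, he⟩
    by_cases h2im : 2 ∈ M.image clf <;> by_cases h3im : 3 ∈ M.image clf
    · obtain ⟨md, hmd, ed⟩ := hget 2 h2im
      obtain ⟨ma, hma, ea⟩ := hget 3 h3im
      have pd := clf_eq2 ed
      have pa := clf_eq3 ea
      have hea : ma.1 = -ma.2 := by
        rcases hc1 ma hma with h | h | h | h
        · exact absurd h pa.1
        · exact absurd h pa.2.1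
        · exact absurd h pa.2.2
        · exact h
      exact conB hL hmd hma pd.2.2 hea (hbasic md hmd).1 (hbasic ma hma).1
    · have hsub : M.image clf ⊆ ({0,1,2} : Finset ℕ) := by
        intro x hx
        have h4 := him hx
        simp only [Finset.mem_insert, Finset.mem_singleton] at h4 ⊢
        rcases h4 with h | h | h | h
        · exact Or.inl h
        · exact Or.inr (Or.inl h)
        · exact Or.inr (Or.inr h)
        · exact absurd (h ▸ hx) h3im
      have heq : ({0,1,2} : Finset ℕ) = M.image clf := by
        have h3c : ({0,1,2} : Finset ℕ).card = 3 := by decide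
        exact (Finset.eq_of_subset_of_card_le hsub (by omega)).symm
      obtain ⟨mh, hmh, eh⟩ := hget 0 (heq ▸ (by simp : (0:ℕ) ∈ ({0,1,2} : Finset ℕ)))
      obtain ⟨mv, hmv, ev⟩ := hget 1 (heq ▸ (by simp : (1:ℕ) ∈ ({0,1,2} : Finset ℕ)))
      obtain ⟨md, hmd, ed⟩ := hget 2 (heq ▸ (by simp : (2:ℕ) ∈ ({0,1,2} : Finset ℕ)))
      exact conC hL hmh hmv hmd (clf_eq0 eh) (clf_eq1 ev).2 (clf_eq2 ed).2.2
        (hbasic mh hmh).1 (hbasic mv hmv).1 (hbasic md hmd).1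
    · have hsub : M.image clf ⊆ ({0,1,3} : Finset ℕ) := by
        intro x hx
        have h4 := him hx
        simp only [Finset.mem_insert, Finset.mem_singleton] at h4 ⊢
        rcases h4 with h | h | h | h
        · exact Or.inl h
        · exact Or.inr (Or.inl h)
        · exact absurd (h ▸ hx) h2im
        · exact Or.inr (Or.inr h)
      have heq : ({0,1,3} : Finset ℕ) = M.image clf := by
        have h3c : ({0,1,3} : Finset ℕ).card = 3 := by decide
        exact (Finset.eq_of_subset_of_card_le hsub (by omega)).symm
      obtain ⟨mh, hmh, eh⟩ := hget 0 (heq ▸ (by simp : (0:ℕ) ∈ ({0,1,3} : Finset ℕ)))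
      obtain ⟨mv, hmv, ev⟩ := hget 1 (heq ▸ (by simp : (1:ℕ) ∈ ({0,1,3} : Finset ℕ)))
      obtain ⟨ma, hma, ea⟩ := hget 3 (heq ▸ (by simp : (3:ℕ) ∈ ({0,1,3} : Finset ℕ)))
      have hea : ma.1 = -ma.2 := by
        rcases hc1 ma hma with h | h | h | h
        · exact absurd h (clf_eq3 ea).1
        · exact absurd h (clf_eq3 ea).2.1
        · exact absurd h (clf_eq3 ea).2.2
        · exact h
      exact conC' hL hmh hmv hma (clf_eq0 eh) (clf_eq1 ev).2 hea
        (hbasic mh hmh).1 (hbasic mv hmv).1 (hbasic ma hma).1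
    · have hsub : M.image clf ⊆ ({0,1} : Finset ℕ) := by
        intro x hx
        have h4 := him hx
        simp only [Finset.mem_insert, Finset.mem_singleton] at h4 ⊢
        rcases h4 with h | h | h | h
        · exact Or.inl h
        · exact Or.inr h
        · exact absurd (h ▸ hx) h2im
        · exact absurd (h ▸ hx) h3im
      have := Finset.card_le_card hsub
      have h01 : ({0,1} : Finset ℕ).card ≤ 2 := by simp
      omega
  · rintro ⟨h1, h2, h3⟩ q hq z hz i
    by_cases hd : ∃ m ∈ M, m.1 = m.2
    · obtain ⟨md, hmd, ed⟩ := hd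
      by_cases hv' : ∃ m ∈ M, m.1 = 0
      · obtain ⟨mv, hmv, ev⟩ := hv'
        have hnedv : md ≠ mv := by
          intro h
          subst h
          exact (hbasic md hmd).1 (Prod.ext_iff.mpr ⟨ev, by rw [← ed]; exact ev⟩)
        have hsub : ({md, mv} : Finset (ℤ × ℤ)) ⊆ M := by
          intro x hx
          rcases Finset.mem_insert.mp hx with h | h
          · exact h ▸ hmd
          · exact (Finset.mem_singleton.mp h) ▸ hmv
        have hMeq : ({md, mv} : Finset (ℤ × ℤ)) = M :=
          Finset.eq_of_subset_of_card_le hsub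
            (le_trans h2 (by rw [Finset.card_insert_of_notMem (by simpa using hnedv)]; simp))
        refine scheme_dv hz (fun m hm => ⟨(hbasic m hm).1, ?_⟩) i
        rw [← hMeq] at hm
        rcases Finset.mem_insert.mp hm with h | h
        · exact Or.inl (h ▸ ed)
        · exact Or.inr ((Finset.mem_singleton.mp h) ▸ ev)
      · refine scheme_dh hz (fun m hm => ⟨(hbasic m hm).1, ?_⟩) i
        rcases h1 m hm with h | h | h | h
        · exact Or.inr h
        · exact absurd ⟨m, hm, h⟩ hv'
        · exact Or.inl h
        · exact absurd ⟨⟨md, hmd, ed⟩, ⟨m, hm, h⟩⟩ h3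
    · by_cases ha : ∃ m ∈ M, m.1 = -m.2
      · obtain ⟨ma, hma, ea⟩ := ha
        by_cases hv' : ∃ m ∈ M, m.1 = 0
        · obtain ⟨mv, hmv, ev⟩ := hv'
          have hneav : ma ≠ mv := by
            intro h
            subst h
            apply (hbasic ma hma).1
            have : ma.2 = 0 := by omega
            exact Prod.ext_iff.mpr ⟨ev, this⟩
          have hsub : ({ma, mv} : Finset (ℤ × ℤ)) ⊆ M := by
            intro x hx
            rcases Finset.mem_insert.mp hx with h | h
            · exact h ▸ hma
            · exact (Finset.mem_singleton.mp h) ▸ hmv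
          have hMeq : ({ma, mv} : Finset (ℤ × ℤ)) = M :=
            Finset.eq_of_subset_of_card_le hsub
              (le_trans h2 (by rw [Finset.card_insert_of_notMem (by simpa using hneav)]; simp))
          refine scheme_av hz (fun m hm => ⟨(hbasic m hm).1, ?_⟩) i
          rw [← hMeq] at hm
          rcases Finset.mem_insert.mp hm with h | h
          · exact Or.inl (h ▸ ea)
          · exact Or.inr ((Finset.mem_singleton.mp h) ▸ ev)
        · refine scheme_ah hz (fun m hm => ⟨(hbasic m hm).1, ?_⟩) i
          rcases h1 m hm with h | h | h | h
          · exact Or.inr h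
          · exact absurd ⟨m, hm, h⟩ hv'
          · exact absurd ⟨m, hm, h⟩ hd
          · exact Or.inl h
      · refine scheme_rook hz (fun m hm => ⟨(hbasic m hm).1, ?_⟩) i
        rcases h1 m hm with h | h | h | h
        · exact Or.inr h
        · exact Or.inl h
        · exact absurd ⟨m, hm, h⟩ hd
        · exact absurd ⟨m, hm, h⟩ ha

theorem stmt3 (M : Finset (ℤ × ℤ)) (hM : IsMoveSet M) (hne : M.Nonempty) :
    (∀ q : ℕ, 1 ≤ q → ∀ z : Fin q → ℝ × ℝ, IsVertex M q z →
        ∀ i, ((z i).1 = 0 ∨ (z i).1 = 1) ∧ ((z i).2 = 0 ∨ (z i).2 = 1)) ↔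
      ((∀ m ∈ M, m.2 = 0 ∨ m.1 = 0 ∨ m.1 = m.2 ∨ m.1 = -m.2) ∧
        M.card ≤ 2 ∧
        ¬((∃ m ∈ M, m.1 = m.2) ∧ (∃ m' ∈ M, m'.1 = -m'.2))) := by
  exact stmt3' M hM hne
end

section
/- Let B be a convex polygon in ℝ² with rational corners, let m = (c,d) be a basic move, let M = {m}, and let q ≥ 2. Then for every corner v of B that has an antipode w with respect to m, there exists a vertex z = (z_1, …, z_q) of the inside-out polytope (B^q, A_M^q) having both v and w among its components. Consequently, for q ≥ 2 the denominators of vertices of (B^q, A_M^q) realize the denominators of all corners of B and of all their antipodes. -/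
/-- A board: a convex polygon in ℝ² with rational corners, i.e. the convex hull of a
finite subset of ℚ², having nonempty interior. -/
def IsBoard (B : Set (ℝ × ℝ)) : Prop :=
  (∃ V : Finset (ℚ × ℚ),
    B = convexHull ℝ ((fun p : ℚ × ℚ => ((p.1 : ℝ), (p.2 : ℝ))) '' (V : Set (ℚ × ℚ)))) ∧
  (interior B).Nonempty

/-- The affine line of an edge (one-dimensional face) of the board `B`. -/
def IsEdgeLine (B : Set (ℝ × ℝ)) (L : Set (ℝ × ℝ)) : Prop :=
  ∃ F : Set (ℝ × ℝ), IsExtreme ℝ B F ∧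
    Module.finrank ℝ (affineSpan ℝ F).direction = 1 ∧
    L = (affineSpan ℝ F : Set (ℝ × ℝ))

/-- The facet hyperplanes of B^q: the sets {z : z i ∈ L} for edge lines L of B. -/
def boardFacetHyps (B : Set (ℝ × ℝ)) (q : ℕ) : Set (Set (Fin q → ℝ × ℝ)) :=
  {H | ∃ i : Fin q, ∃ L : Set (ℝ × ℝ), IsEdgeLine B L ∧ H = {z | z i ∈ L}}

/-- A vertex of the inside-out polytope (B^q, A_M^q): a point of B^q such that the
intersection of all move hyperplanes and facet hyperplanes containing it is exactly it. -/
def IsVertexB (B : Set (ℝ × ℝ)) (M : Finset (ℤ × ℤ)) (q : ℕ) (z : Fin q → ℝ × ℝ) : Prop :=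
  (∀ i, z i ∈ B) ∧
  ⋂₀ {H | H ∈ moveHyps M q ∪ boardFacetHyps B q ∧ z ∈ H} = {z}

/-- `w` is the antipode of `v` with respect to the move `m`: the point `w ≠ v` such that
the intersection of `B` with the line through `v` in direction `m` is the segment `[v,w]`. -/
def IsAntipode (B : Set (ℝ × ℝ)) (m : ℤ × ℤ) (v w : ℝ × ℝ) : Prop :=
  w ≠ v ∧ B ∩ {p | ∃ t : ℝ, p = v + t • ((m.1 : ℝ), (m.2 : ℝ))} = segment ℝ v w

/-! Take `z = (v, w, …, w)`. Two lines through `v` and two further corners in independent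
directions pin `z₀ = v`. The move hyperplanes `H₀ᵢ` confine every other `zᵢ` to the line
`v + ℝ m`, so one edge line through `w` transversal to `m` pins `zᵢ = w`. If `w` is a corner,
a line through `w` and another corner does. Otherwise `w` lies on the boundary of `B`, and the
face exposed by a supporting functional `f` at `w` is an edge through `w`; it is transversal to
`m`, for if `f m = 0` the face would lie in `B ∩ (v + ℝ m) = [v, w]`, making `w` a corner. -/

open Set Submodule Topology

section Extreme

variable {E : Type*} [AddCommGroup E] [Module ℝ E]

lemma right_mem_extremePoints_segment (v w : E) : w ∈ (segment ℝ v w).extremePoints ℝ := by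
  rcases eq_or_ne v w with rfl | hvw
  · simp [extremePoints_singleton]
  refine ⟨right_mem_segment ℝ v w, ?_⟩
  rintro x₁ hx₁ x₂ hx₂ ⟨a, b, ha, hb, hab, hw⟩
  rw [segment_eq_image_lineMap] at hx₁ hx₂
  obtain ⟨s₁, ⟨-, hs₁⟩, rfl⟩ := hx₁
  obtain ⟨s₂, ⟨-, hs₂⟩, rfl⟩ := hx₂
  have hcombo : a * s₁ + b * s₂ = 1 := AffineMap.lineMap_injective ℝ hvw <|
    (Convex.combo_affine_apply hab).trans (hw.trans (AffineMap.lineMap_apply_one v w).symm)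
  have h₁ : s₁ = 1 := by nlinarith
  rw [h₁, AffineMap.lineMap_apply_one]

lemma IsExtreme.union {A B C : Set E} (hB : IsExtreme ℝ A B) (hC : IsExtreme ℝ A C) :
    IsExtreme ℝ A (B ∪ C) :=
  ⟨union_subset hB.1 hC.1, fun _ hx _ hy _ hz hzs => hz.imp (hB.2 hx hy · hzs) (hC.2 hx hy · hzs)⟩

lemma isExtreme_pair {A : Set E} {a b : E} (ha : a ∈ A.extremePoints ℝ)
    (hb : b ∈ A.extremePoints ℝ) : IsExtreme ℝ A {a, b} :=
  (isExtreme_singleton.2 ha).union (isExtreme_singleton.2 hb)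

end Extreme

lemma eq_span_singleton_of_ne_top {V : Type*} [AddCommGroup V] [Module ℝ V]
    [FiniteDimensional ℝ V] (hV : Module.finrank ℝ V = 2) {S : Submodule ℝ V}
    (hS : S ≠ ⊤) {u : V} (hu : u ∈ S) (hu₀ : u ≠ 0) : S = ℝ ∙ u := by
  refine (eq_of_le_of_finrank_le ((span_singleton_le_iff_mem u S).2 hu) ?_).symm
  have := finrank_lt hS
  rw [finrank_span_singleton hu₀]
  omega

lemma mem_span_singleton_of_cross_eq_zero {x u : ℝ × ℝ} (hu : u ≠ 0)
    (h : x.1 * u.2 - x.2 * u.1 = 0) : x ∈ ℝ ∙ u := by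
  rw [mem_span_singleton]
  rcases ne_or_eq u.1 0 with h₁ | h₁
  · refine ⟨x.1 / u.1, Prod.ext ?_ ?_⟩
    · simp only [Prod.smul_fst, smul_eq_mul]
      field_simp
    · simp only [Prod.smul_snd, smul_eq_mul]
      field_simp
      linarith
  · have h₂ : u.2 ≠ 0 := fun h₂ => hu (Prod.ext h₁ h₂)
    refine ⟨x.2 / u.2, Prod.ext ?_ ?_⟩
    · simp only [Prod.smul_fst, smul_eq_mul, h₁] at h ⊢
      field_simp
      linarith
    · simp only [Prod.smul_snd, smul_eq_mul]
      field_simp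

lemma AffineSubspace.eq_of_sub_mem_span_singleton {V : Type*} [AddCommGroup V] [Module ℝ V]
    {A : AffineSubspace ℝ V} {p x u : V} (hp : p ∈ A) (hx : x ∈ A) (hu : u ∉ A.direction)
    (hxp : x - p ∈ ℝ ∙ u) : x = p := by
  obtain ⟨t, ht⟩ := mem_span_singleton.1 hxp
  rcases eq_or_ne t 0 with rfl | ht₀
  · rwa [zero_smul, eq_comm, sub_eq_zero] at ht
  · have htu : t • u ∈ A.direction := ht ▸ A.vsub_mem_direction hx hp
    exact absurd ((A.direction.smul_mem_iff ht₀).1 htu) hu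

/- `IsEdgeLine` only asks for a one-dimensional extreme subset, and a pair of corners is one,
so every chord between two corners qualifies. -/
lemma isEdgeLine_affineSpan_pair {B : Set (ℝ × ℝ)} {a b : ℝ × ℝ}
    (ha : a ∈ B.extremePoints ℝ) (hb : b ∈ B.extremePoints ℝ) (hab : a ≠ b) :
    IsEdgeLine B line[ℝ, a, b] := by
  refine ⟨{a, b}, isExtreme_pair ha hb, ?_, rfl⟩
  rw [direction_affineSpan, vectorSpan_pair]
  exact finrank_span_singleton (vsub_ne_zero.2 hab)

lemma IsEdgeLine.finrank_direction {B : Set (ℝ × ℝ)} {A : AffineSubspace ℝ (ℝ × ℝ)}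
    (h : IsEdgeLine B A) : Module.finrank ℝ A.direction = 1 := by
  obtain ⟨F, -, hF, hA⟩ := h
  rwa [SetLike.coe_injective hA]

namespace IsBoard

variable {B : Set (ℝ × ℝ)}

lemma convex (hB : IsBoard B) : Convex ℝ B := by
  obtain ⟨⟨V, rfl⟩, -⟩ := hB
  exact convex_convexHull ℝ _

lemma isCompact (hB : IsBoard B) : IsCompact B := by
  obtain ⟨⟨V, rfl⟩, -⟩ := hB
  exact ((V : Set (ℚ × ℚ)).toFinite.image _).isCompact_convexHull ℝ

lemma affineSpan_extremePoints (hB : IsBoard B) : affineSpan ℝ (B.extremePoints ℝ) = ⊤ := by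
  have hB' : B ⊆ affineSpan ℝ (B.extremePoints ℝ) :=
    (closure_convexHull_extremePoints hB.isCompact hB.convex).symm.subset.trans <|
      closure_minimal (convexHull_min (subset_affineSpan ℝ _) (AffineSubspace.convex _))
        (AffineSubspace.closed_of_finiteDimensional _)
  rw [← hB.convex.interior_nonempty_iff_affineSpan_eq_top.1 hB.2]
  exact le_antisymm (affineSpan_mono ℝ extremePoints_subset) (affineSpan_le.2 hB')

lemma exists_extremePoint_sub_notMem_span (hB : IsBoard B) (p u : ℝ × ℝ) :
    ∃ a ∈ B.extremePoints ℝ, a - p ∉ ℝ ∙ u := by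
  by_contra! h
  have hsub : B.extremePoints ℝ ⊆ AffineSubspace.mk' p (ℝ ∙ u) := h
  have htop := AffineSubspace.direction_le (hB.affineSpan_extremePoints ▸ affineSpan_le.2 hsub)
  rw [AffineSubspace.direction_top, AffineSubspace.direction_mk'] at htop
  have hu : Module.finrank ℝ (ℝ ∙ u) ≤ 1 :=
    (finrank_span_le_card ({u} : Set (ℝ × ℝ))).trans (by simp)
  have := finrank_mono htop
  rw [finrank_top, Module.finrank_prod, Module.finrank_self] at this
  omega

lemma exists_edgeLine_notMem_direction (hB : IsBoard B) {p u : ℝ × ℝ}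
    (hp : p ∈ B.extremePoints ℝ) (hu : u ≠ 0) :
    ∃ A : AffineSubspace ℝ (ℝ × ℝ), IsEdgeLine B A ∧ p ∈ A ∧ u ∉ A.direction := by
  obtain ⟨a, ha, hau⟩ := hB.exists_extremePoint_sub_notMem_span p u
  have hpa : p ≠ a := by
    rintro rfl
    simp at hau
  refine ⟨line[ℝ, p, a], isEdgeLine_affineSpan_pair hp ha hpa, left_mem_affineSpan_pair ℝ p a, ?_⟩
  rw [direction_affineSpan, vectorSpan_pair_rev, vsub_eq_sub, mem_span_singleton]
  rintro ⟨c, hc⟩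
  have hc₀ : c ≠ 0 := by rintro rfl; exact hu (by rw [← hc, zero_smul])
  exact hau (mem_span_singleton.2 ⟨c⁻¹, by rw [← hc, inv_smul_smul₀ hc₀]⟩)

lemma exists_edgeLines_inter_eq_singleton (hB : IsBoard B) {p : ℝ × ℝ}
    (hp : p ∈ B.extremePoints ℝ) :
    ∃ A₁ A₂ : AffineSubspace ℝ (ℝ × ℝ), IsEdgeLine B A₁ ∧ IsEdgeLine B A₂ ∧
      (A₁ : Set (ℝ × ℝ)) ∩ A₂ = {p} := by
  obtain ⟨u, hu⟩ := exists_ne (0 : ℝ × ℝ)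
  obtain ⟨A₁, hA₁, hpA₁, -⟩ := hB.exists_edgeLine_notMem_direction hp hu
  obtain ⟨d, hd₀, hdir⟩ := finrank_eq_one_iff'.1 hA₁.finrank_direction
  obtain ⟨A₂, hA₂, hpA₂, hdA₂⟩ :=
    hB.exists_edgeLine_notMem_direction hp (u := d) (by simpa using hd₀)
  refine ⟨A₁, A₂, hA₁, hA₂, eq_singleton_iff_unique_mem.2 ⟨⟨hpA₁, hpA₂⟩, fun x ⟨hx₁, hx₂⟩ => ?_⟩⟩
  obtain ⟨c, hc⟩ := hdir ⟨x - p, A₁.vsub_mem_direction hx₁ hpA₁⟩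
  exact AffineSubspace.eq_of_sub_mem_span_singleton hpA₂ hx₂ hdA₂
    (mem_span_singleton.2 ⟨c, congrArg Subtype.val hc⟩)

end IsBoard

section Antipode

variable {B : Set (ℝ × ℝ)} {u v w : ℝ × ℝ}

lemma right_mem_inter_of_segment_eq (hseg : B ∩ {p | p - v ∈ ℝ ∙ u} = segment ℝ v w) :
    w ∈ B ∩ {p | p - v ∈ ℝ ∙ u} :=
  hseg ▸ right_mem_segment ℝ v w

lemma notMem_interior_of_segment_eq (hwv : w ≠ v)
    (hseg : B ∩ {p | p - v ∈ ℝ ∙ u} = segment ℝ v w) : w ∉ interior B := by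
  intro hw
  have hnear : ∀ᶠ s in 𝓝 (1 : ℝ), AffineMap.lineMap v w s ∈ interior B :=
    (AffineMap.lineMap_continuous.tendsto' 1 w (AffineMap.lineMap_apply_one v w)).eventually
      (isOpen_interior.mem_nhds hw)
  obtain ⟨s, hs, hs₁⟩ := (hnear.and_frequently (frequently_gt_nhds 1)).exists
  have hline : AffineMap.lineMap v w s - v ∈ ℝ ∙ u := by
    rw [← vsub_eq_sub, AffineMap.lineMap_vsub_left]
    exact smul_mem _ _ (right_mem_inter_of_segment_eq hseg).2
  have hseg' : AffineMap.lineMap v w s ∈ segment ℝ v w := hseg ▸ ⟨interior_subset hs, hline⟩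
  rw [segment_eq_image_lineMap, (AffineMap.lineMap_injective ℝ hwv.symm).mem_set_image] at hseg'
  exact hs₁.not_ge hseg'.2

lemma apply_ne_zero_of_segment_eq (hu : u ≠ 0) (hwe : w ∉ B.extremePoints ℝ)
    (hseg : B ∩ {p | p - v ∈ ℝ ∙ u} = segment ℝ v w) {f : StrongDual ℝ (ℝ × ℝ)} (hf : f ≠ 0)
    (hwf : w ∈ f.toExposed B) : f u ≠ 0 := by
  intro hfu
  have hker : LinearMap.ker (f : (ℝ × ℝ) →ₗ[ℝ] ℝ) = ℝ ∙ u := by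
    refine eq_span_singleton_of_ne_top (by simp) ?_ hfu hu
    rw [Ne, LinearMap.ker_eq_top]
    exact_mod_cast hf
  have hF : f.toExposed B ⊆ segment ℝ v w := fun x hx => by
    have hxw : f (x - w) = 0 := by
      rw [map_sub, sub_eq_zero]
      exact le_antisymm (hwf.2 x hx.1) (hx.2 w hwf.1)
    rw [← hseg]
    refine ⟨hx.1, ?_⟩
    simpa using add_mem (hker ▸ hxw : x - w ∈ ℝ ∙ u) (right_mem_inter_of_segment_eq hseg).2
  exact hwe <| ContinuousLinearMap.toExposed.isExposed.isExtreme.extremePoints_subset_extremePoints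
    (inter_extremePoints_subset_extremePoints_of_subset hF
      ⟨hwf, right_mem_extremePoints_segment v w⟩)

lemma IsBoard.exists_edgeLine_of_segment_eq (hB : IsBoard B) (hu : u ≠ 0) (hwv : w ≠ v)
    (hseg : B ∩ {p | p - v ∈ ℝ ∙ u} = segment ℝ v w) :
    ∃ A : AffineSubspace ℝ (ℝ × ℝ), IsEdgeLine B A ∧ w ∈ A ∧ u ∉ A.direction := by
  by_cases hwe : w ∈ B.extremePoints ℝ
  · exact hB.exists_edgeLine_notMem_direction hwe hu
  have hwB : w ∈ B := (right_mem_inter_of_segment_eq hseg).1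
  obtain ⟨f, c, hf, hfB, hfw⟩ := geometric_hahn_banach_of_nonempty_interior hB.convex
    (convex_singleton w) (disjoint_singleton_right.2 (notMem_interior_of_segment_eq hwv hseg))
    hB.2 (singleton_nonempty w)
  set F := f.toExposed B
  have hwF : w ∈ F := ⟨hwB, fun p hp => (hfB p hp).trans (hfw w rfl)⟩
  have hfu := apply_ne_zero_of_segment_eq hu hwe hseg hf hwF
  have hdir : (affineSpan ℝ F).direction ≤ LinearMap.ker (f : (ℝ × ℝ) →ₗ[ℝ] ℝ) := by
    rw [direction_affineSpan, vectorSpan_def, span_le]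
    rintro _ ⟨x, hx, y, hy, rfl⟩
    simp [le_antisymm (hx.2 y hy.1) (hy.2 x hx.1)]
  have huF : u ∉ (affineSpan ℝ F).direction := fun h => hfu (hdir h)
  obtain ⟨x, hxF, hxw⟩ : ∃ x ∈ F, x ≠ w := by
    by_contra! h
    have hFw : F = {w} := eq_singleton_iff_unique_mem.2 ⟨hwF, h⟩
    exact hwe (isExtreme_singleton.1 (hFw ▸ ContinuousLinearMap.toExposed.isExposed.isExtreme))
  refine ⟨affineSpan ℝ F, ⟨F, ContinuousLinearMap.toExposed.isExposed.isExtreme, ?_, rfl⟩,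
    mem_affineSpan ℝ hwF, huF⟩
  rw [eq_span_singleton_of_ne_top (by simp) (fun h => huF (by rw [h]; exact mem_top))
    (AffineSubspace.vsub_mem_direction (mem_affineSpan ℝ hxF) (mem_affineSpan ℝ hwF))
    (vsub_ne_zero.2 hxw)]
  exact finrank_span_singleton (vsub_ne_zero.2 hxw)

end Antipode

lemma isVertexB_cons {B : Set (ℝ × ℝ)} {m : ℤ × ℤ} {n : ℕ} {v w : ℝ × ℝ}
    (hvB : v ∈ B) (hwB : w ∈ B) (hm : ((m.1 : ℝ), (m.2 : ℝ)) ≠ 0)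
    (hvw : w - v ∈ ℝ ∙ ((m.1 : ℝ), (m.2 : ℝ)))
    {A₁ A₂ A : AffineSubspace ℝ (ℝ × ℝ)} (hA₁ : IsEdgeLine B A₁) (hA₂ : IsEdgeLine B A₂)
    (hA₁₂ : (A₁ : Set (ℝ × ℝ)) ∩ A₂ = {v})
    (hA : IsEdgeLine B A) (hwA : w ∈ A) (hmA : ((m.1 : ℝ), (m.2 : ℝ)) ∉ A.direction) :
    IsVertexB B {m} (n + 1) (Fin.cons v fun _ => w) := by
  set z : Fin (n + 1) → ℝ × ℝ := Fin.cons v fun _ => w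
  refine ⟨Fin.cases hvB fun _ => hwB,
    eq_singleton_iff_unique_mem.2 ⟨mem_sInter.2 fun H hH => hH.2, fun y hy => ?_⟩⟩
  have hyH : ∀ H ∈ moveHyps {m} (n + 1) ∪ boardFacetHyps B (n + 1), z ∈ H → y ∈ H :=
    fun H hH hzH => mem_sInter.1 hy H ⟨hH, hzH⟩
  have hfacet : ∀ i (L : AffineSubspace ℝ (ℝ × ℝ)), IsEdgeLine B L → z i ∈ L → y i ∈ L :=
    fun i L hL hzL => hyH {x | x i ∈ L} (Or.inr ⟨i, L, hL, rfl⟩) hzL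
  have hvA : v ∈ (A₁ : Set (ℝ × ℝ)) ∩ A₂ := hA₁₂ ▸ rfl
  have hy₀ : y 0 = v := hA₁₂.subset ⟨hfacet 0 A₁ hA₁ hvA.1, hfacet 0 A₂ hA₂ hvA.2⟩
  funext i
  refine Fin.cases hy₀ (fun j => ?_) i
  obtain ⟨t, ht⟩ := mem_span_singleton.1 hvw
  have hmove : y j.succ - y 0 ∈ ℝ ∙ ((m.1 : ℝ), (m.2 : ℝ)) := by
    have h₁ : w.1 - v.1 = t * m.1 := by simpa using congrArg Prod.fst ht.symm
    have h₂ : w.2 - v.2 = t * m.2 := by simpa using congrArg Prod.snd ht.symm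
    have hz : ((z j.succ).1 - (z 0).1) * m.2 - ((z j.succ).2 - (z 0).2) * m.1 = 0 := by
      simp only [z, Fin.cons_succ, Fin.cons_zero, h₁, h₂]
      ring
    exact mem_span_singleton_of_cross_eq_zero hm
      (hyH _ (Or.inl ⟨m, Finset.mem_singleton_self m, 0, j.succ, Fin.succ_pos j, rfl⟩) hz)
  refine AffineSubspace.eq_of_sub_mem_span_singleton hwA (hfacet j.succ A hA hwA) hmA ?_
  change y j.succ - w ∈ _
  simpa [hy₀] using sub_mem hmove hvw

theorem stmt6 (B : Set (ℝ × ℝ)) (hB : IsBoard B) (m : ℤ × ℤ) (hm : IsBasicMove m)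
    (q : ℕ) (hq : 2 ≤ q) (v : ℝ × ℝ) (hv : v ∈ Set.extremePoints ℝ B)
    (w : ℝ × ℝ) (hw : IsAntipode B m v w) :
    ∃ z : Fin q → ℝ × ℝ, IsVertexB B {m} q z ∧ (∃ i, z i = v) ∧ (∃ j, z j = w) := by
  obtain ⟨n, rfl⟩ : ∃ n, q = n + 2 := ⟨q - 2, by omega⟩
  obtain ⟨hwv, hseg⟩ := hw
  set u : ℝ × ℝ := ((m.1 : ℝ), (m.2 : ℝ))
  have hu : u ≠ 0 := by simpa [u, Prod.ext_iff] using hm.1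
  have hline : {p | ∃ t : ℝ, p = v + t • u} = {p | p - v ∈ ℝ ∙ u} := by
    ext p
    simp only [Set.mem_ofPred_eq, mem_span_singleton]
    exact exists_congr fun t => by rw [eq_comm, eq_sub_iff_add_eq']
  rw [hline] at hseg
  obtain ⟨A₁, A₂, hA₁, hA₂, hA₁₂⟩ := hB.exists_edgeLines_inter_eq_singleton hv
  obtain ⟨A, hA, hwA, huA⟩ := hB.exists_edgeLine_of_segment_eq hu hwv hseg
  obtain ⟨hwB, hwu⟩ := right_mem_inter_of_segment_eq hseg
  exact ⟨Fin.cons v fun _ => w, isVertexB_cons hv.1 hwB hu hwu hA₁ hA₂ hA₁₂ hA hwA huA,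
    ⟨0, rfl⟩, ⟨1, rfl⟩⟩
end

section
/- Let m_1, m_2, m_3 ∈ ℤ² be nonzero vectors, no two of which are parallel, and let w_1, w_2, w_3 be nonzero integers with gcd(w_1, w_2, w_3) = 1 and w_1·m_1 + w_2·m_2 + w_3·m_3 = (0,0). Suppose z_1, z_2, z_3 ∈ ℤ² are pairwise distinct points such that z_2 − z_1 = a·m_1, z_3 − z_1 = b·m_2, and z_3 − z_2 = e·m_3 for some nonzero integers a, b, e. Then there exists a nonzero integer t such that a = t·w_1, b = −t·w_2, and e = t·w_3. In particular, every integral triangle with edge directions m_1, m_2, m_3 is an integer multiple of the smallest one, whose edge vectors are w_1·m_1, −w_2·m_2, and w_3·m_3. -/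
theorem linearIndependent_pair_of_not_intPara {m n : ℤ × ℤ} (h : ¬ IntPara m n) :
    LinearIndependent ℤ ![m, n] := by
  refine LinearIndependent.pair_iff.mpr fun s t hst => ?_
  have h1 : (s : ℚ) * m.1 + t * n.1 = 0 := by exact_mod_cast congrArg Prod.fst hst
  have h2 : (s : ℚ) * m.2 + t * n.2 = 0 := by exact_mod_cast congrArg Prod.snd hst
  by_contra hne
  apply h
  rcases eq_or_ne t 0 with rfl | ht
  · have hs : (s : ℚ) ≠ 0 := by exact_mod_cast fun hs => hne ⟨hs, rfl⟩
    simp only [Int.cast_zero, zero_mul, add_zero, mul_eq_zero, hs, false_or] at h1 h2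
    exact Or.inr ⟨0, by simp [h1], by simp [h2]⟩
  · have ht : (t : ℚ) ≠ 0 := by exact_mod_cast ht
    refine Or.inl ⟨-s / t, ?_, ?_⟩ <;> field_simp <;> linarith

theorem cross_eq_of_linearIndependent_pairs {R M : Type*} [CommRing R] [AddCommGroup M]
    [Module R M] {m₁ m₂ m₃ : M} (h₁₂ : LinearIndependent R ![m₁, m₂])
    (h₂₃ : LinearIndependent R ![m₂, m₃])
    {w₁ w₂ w₃ c₁ c₂ c₃ : R} (hw : w₁ • m₁ + w₂ • m₂ + w₃ • m₃ = 0)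
    (hc : c₁ • m₁ + c₂ • m₂ + c₃ • m₃ = 0) :
    c₁ * w₂ = c₂ * w₁ ∧ c₁ * w₃ = c₃ * w₁ ∧ c₂ * w₃ = c₃ * w₂ := by
  obtain ⟨-, h₂⟩ := LinearIndependent.pair_iff.mp h₁₂ (w₃ * c₁ - c₃ * w₁) (w₃ * c₂ - c₃ * w₂)
    (by linear_combination (norm := module) w₃ • hc - c₃ • hw)
  obtain ⟨h₁, h₃⟩ := LinearIndependent.pair_iff.mp h₂₃ (w₁ * c₂ - c₁ * w₂) (w₁ * c₃ - c₁ * w₃)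
    (by linear_combination (norm := module) w₁ • hc - c₁ • hw)
  exact ⟨by linear_combination -h₁, by linear_combination -h₃, by linear_combination h₂⟩

theorem Int.exists_bezout_of_gcd_gcd_eq_one {w₁ w₂ w₃ : ℤ} (h : Int.gcd w₁ (Int.gcd w₂ w₃) = 1) :
    ∃ u₁ u₂ u₃ : ℤ, u₁ * w₁ + u₂ * w₂ + u₃ * w₃ = 1 := by
  obtain ⟨u, v, huv⟩ := Int.isCoprime_iff_gcd_eq_one.mpr h
  refine ⟨u, v * Int.gcdA w₂ w₃, v * Int.gcdB w₂ w₃, ?_⟩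
  linear_combination huv - v * Int.gcd_eq_gcd_ab w₂ w₃

theorem Int.exists_eq_mul_of_cross_eq {w₁ w₂ w₃ c₁ c₂ c₃ : ℤ}
    (hw : Int.gcd w₁ (Int.gcd w₂ w₃) = 1)
    (h₁₂ : c₁ * w₂ = c₂ * w₁) (h₁₃ : c₁ * w₃ = c₃ * w₁) (h₂₃ : c₂ * w₃ = c₃ * w₂) :
    ∃ t : ℤ, c₁ = t * w₁ ∧ c₂ = t * w₂ ∧ c₃ = t * w₃ := by
  obtain ⟨u₁, u₂, u₃, hu⟩ := Int.exists_bezout_of_gcd_gcd_eq_one hw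
  refine ⟨u₁ * c₁ + u₂ * c₂ + u₃ * c₃, ?_, ?_, ?_⟩
  · linear_combination -c₁ * hu + u₂ * h₁₂ + u₃ * h₁₃
  · linear_combination -c₂ * hu - u₁ * h₁₂ + u₃ * h₂₃
  · linear_combination -c₃ * hu - u₁ * h₁₃ - u₂ * h₂₃

theorem stmt11_general (m1 m2 m3 : ℤ × ℤ)
    (h12 : ¬ IntPara m1 m2) (h23 : ¬ IntPara m2 m3)
    (w1 w2 w3 : ℤ)
    (hgcd : Int.gcd w1 (Int.gcd w2 w3) = 1)
    (hsum : w1 • m1 + w2 • m2 + w3 • m3 = 0)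
    (z1 z2 z3 : ℤ × ℤ)
    (a b e : ℤ) (ha : a ≠ 0)
    (hΔ1 : z2 - z1 = a • m1) (hΔ2 : z3 - z1 = b • m2) (hΔ3 : z3 - z2 = e • m3) :
    ∃ t : ℤ, t ≠ 0 ∧ a = t * w1 ∧ b = -(t * w2) ∧ e = t * w3 := by
  have hloop : a • m1 + (-b) • m2 + e • m3 = 0 := by
    rw [neg_smul, ← hΔ1, ← hΔ2, ← hΔ3]; abel
  obtain ⟨c12, c13, c23⟩ := cross_eq_of_linearIndependent_pairs
    (linearIndependent_pair_of_not_intPara h12) (linearIndependent_pair_of_not_intPara h23)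
    hsum hloop
  obtain ⟨t, rfl, hb, rfl⟩ := Int.exists_eq_mul_of_cross_eq hgcd c12 c13 c23
  exact ⟨t, left_ne_zero_of_mul ha, rfl, by rw [← hb, neg_neg], rfl⟩

theorem stmt11 (m1 m2 m3 : ℤ × ℤ) (h1 : m1 ≠ 0) (h2 : m2 ≠ 0) (h3 : m3 ≠ 0)
    (h12 : ¬ IntPara m1 m2) (h13 : ¬ IntPara m1 m3) (h23 : ¬ IntPara m2 m3)
    (w1 w2 w3 : ℤ) (hw1 : w1 ≠ 0) (hw2 : w2 ≠ 0) (hw3 : w3 ≠ 0)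
    (hgcd : Int.gcd w1 (Int.gcd w2 w3) = 1)
    (hsum : w1 • m1 + w2 • m2 + w3 • m3 = 0)
    (z1 z2 z3 : ℤ × ℤ) (hz12 : z1 ≠ z2) (hz13 : z1 ≠ z3) (hz23 : z2 ≠ z3)
    (a b e : ℤ) (ha : a ≠ 0) (hb : b ≠ 0) (he : e ≠ 0)
    (hΔ1 : z2 - z1 = a • m1) (hΔ2 : z3 - z1 = b • m2) (hΔ3 : z3 - z2 = e • m3) :
    ∃ t : ℤ, t ≠ 0 ∧ a = t * w1 ∧ b = -(t * w2) ∧ e = t * w3 :=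
  stmt11_general m1 m2 m3 h12 h23 w1 w2 w3 hgcd hsum z1 z2 z3 a b e ha hΔ1 hΔ2 hΔ3
end

section
/- Let M = {m_1, m_2, m_3} be a move set of three basic moves m_i = (c_i, d_i), and let w_1, w_2, w_3 be nonzero integers with gcd(w_1, w_2, w_3) = 1 and w_1·m_1 + w_2·m_2 + w_3·m_3 = (0,0). Set Δ* = max(|w_1 c_1|, |w_1 d_1|, |w_2 c_2|, |w_2 d_2|, |w_3 c_3|, |w_3 d_3|). Then: (i) every vertex z = (z_1, z_2, z_3) of the inside-out polytope (([0,1]²)³, A_M³) whose components are pairwise distinct and satisfy z_2 − z_1 ∈ ℝ·m_1, z_3 − z_1 ∈ ℝ·m_2, z_3 − z_2 ∈ ℝ·m_3 (a triangular configuration of three pairwise attacking pieces) has denominator Δ(z) = Δ*; (ii) such a vertex exists. -/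
open Set

def castVec (m : ℤ × ℤ) : ℝ × ℝ := ((m.1 : ℝ), (m.2 : ℝ))

@[simp] lemma castVec_fst (m : ℤ × ℤ) : (castVec m).1 = m.1 := rfl

@[simp] lemma castVec_snd (m : ℤ × ℤ) : (castVec m).2 = m.2 := rfl

lemma castVec_sub (a b : ℤ × ℤ) : castVec (a - b) = castVec a - castVec b := by
  ext <;> simp

lemma castVec_injective : Function.Injective castVec := fun a b h =>
  Prod.ext (by simpa using congrArg Prod.fst h) (by simpa using congrArg Prod.snd h)

lemma norm_castVec (m : ℤ × ℤ) : ‖castVec m‖ = ‖m‖ := by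
  simp only [Prod.norm_def, castVec_fst, castVec_snd, Int.norm_eq_abs, Real.norm_eq_abs]

@[simp] lemma castVec_zero : castVec 0 = 0 := by
  ext <;> simp

lemma castVec_ne_zero {m : ℤ × ℤ} (hm : m ≠ 0) : castVec m ≠ 0 := fun h =>
  hm (castVec_injective (h.trans castVec_zero.symm))

lemma castVec_add (a b : ℤ × ℤ) : castVec (a + b) = castVec a + castVec b := by
  ext <;> simp

lemma castVec_smul (w : ℤ) (m : ℤ × ℤ) : castVec (w • m) = (w : ℝ) • castVec m := by
  ext <;> simp

lemma castVec_neg (m : ℤ × ℤ) : castVec (-m) = -castVec m := by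
  ext <;> simp

lemma exists_eq_smul_iff_mul_sub_mul_eq_zero {K : Type*} [Field K] {a m : K × K} (hm : m ≠ 0) :
    (∃ t : K, a = t • m) ↔ a.1 * m.2 - a.2 * m.1 = 0 := by
  constructor
  · rintro ⟨t, rfl⟩
    simp only [Prod.smul_fst, Prod.smul_snd, smul_eq_mul]
    ring
  · intro h
    by_cases h1 : m.1 = 0
    · have h2 : m.2 ≠ 0 := fun h2 => hm (Prod.ext h1 h2)
      refine ⟨a.2 / m.2, Prod.ext ?_ ?_⟩
      · simp only [h1, mul_zero, sub_zero, mul_eq_zero, h2, or_false] at h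
        simp [h, h1]
      · simp [h2]
    · refine ⟨a.1 / m.1, Prod.ext ?_ ?_⟩
      · simp [h1]
      · simp only [Prod.smul_snd, smul_eq_mul]
        field_simp
        linear_combination -h

lemma mul_sub_mul_ne_zero_of_not_intPara {m m' : ℤ × ℤ} (hm : m ≠ 0) (h : ¬ IntPara m m') :
    (m.1 * m'.2 - m.2 * m'.1 : ℝ) ≠ 0 := by
  intro h0
  have hmQ : (((m.1 : ℚ), (m.2 : ℚ)) : ℚ × ℚ) ≠ 0 := fun h' =>
    hm (Prod.ext (by simpa using congrArg Prod.fst h') (by simpa using congrArg Prod.snd h'))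
  have hZ : m'.1 * m.2 - m'.2 * m.1 = 0 := by
    have : (m'.1 * m.2 - m'.2 * m.1 : ℝ) = 0 := by linear_combination -h0
    exact_mod_cast this
  obtain ⟨r, hr⟩ := (exists_eq_smul_iff_mul_sub_mul_eq_zero hmQ
    (a := ((m'.1 : ℚ), (m'.2 : ℚ)))).2 (by dsimp only; exact_mod_cast hZ)
  exact h (Or.inl ⟨r, by simpa using congrArg Prod.fst hr, by simpa using congrArg Prod.snd hr⟩)

lemma eq_zero_of_smul_add_smul_eq_zero {a b : ℝ × ℝ} (hab : a.1 * b.2 - a.2 * b.1 ≠ 0)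
    {α β : ℝ} (h : α • a + β • b = 0) : α = 0 ∧ β = 0 := by
  have h1 := congrArg Prod.fst h
  have h2 := congrArg Prod.snd h
  simp only [Prod.fst_add, Prod.snd_add, Prod.smul_fst, Prod.smul_snd, smul_eq_mul, Prod.fst_zero,
    Prod.snd_zero] at h1 h2
  constructor
  · refine (mul_eq_zero.1 ?_).resolve_right hab
    linear_combination b.2 * h1 - b.1 * h2
  · refine (mul_eq_zero.1 ?_).resolve_right hab
    linear_combination a.1 * h2 - a.2 * h1

lemma mem_moveHyp_iff {q : ℕ} {m : ℤ × ℤ} (hm : m ≠ 0) {i j : Fin q} {z : Fin q → ℝ × ℝ} :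
    z ∈ {z : Fin q → ℝ × ℝ | ((z j).1 - (z i).1) * (m.2 : ℝ) - ((z j).2 - (z i).2) * (m.1 : ℝ) = 0}
      ↔ ∃ t : ℝ, z j - z i = t • castVec m := by
  rw [exists_eq_smul_iff_mul_sub_mul_eq_zero (castVec_ne_zero hm)]
  rfl

def affineConfig {q : ℕ} (c : ℝ × ℝ) (s : ℝ) (v : Fin q → ℤ × ℤ) : Fin q → ℝ × ℝ :=
  fun p => c + s • castVec (v p)

section AffineConfig

variable {q : ℕ} {M : Finset (ℤ × ℤ)} {c : ℝ × ℝ} {s : ℝ} {v : Fin q → ℤ × ℤ}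

lemma affineConfig_sub (i j : Fin q) :
    affineConfig c s v i - affineConfig c s v j = s • castVec (v i - v j) := by
  simp only [affineConfig, castVec_sub, smul_sub]
  abel

lemma affineConfig_injective (hs : s ≠ 0) (hv : Function.Injective v) :
    Function.Injective (affineConfig c s v) := by
  intro i j h
  apply hv
  have := affineConfig_sub (c := c) (s := s) (v := v) i j
  rw [h, sub_self, eq_comm, smul_eq_zero_iff_right hs, castVec_sub, sub_eq_zero] at this
  exact castVec_injective this

lemma affineConfig_mem_moveHyps {H : Set (Fin q → ℝ × ℝ)} (hH : H ∈ moveHyps M q) (hs : s ≠ 0)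
    (hz : affineConfig c s v ∈ H) (c' : ℝ × ℝ) (s' : ℝ) : affineConfig c' s' v ∈ H := by
  obtain ⟨m, -, i, j, -, rfl⟩ := hH
  simp only [mem_ofPred_eq, affineConfig, Prod.fst_add, Prod.snd_add, Prod.smul_fst,
    Prod.smul_snd, castVec_fst, castVec_snd, smul_eq_mul] at hz ⊢
  have hX : ((v j).1 - (v i).1 : ℝ) * m.2 - ((v j).2 - (v i).2) * m.1 = 0 := by
    refine (mul_eq_zero.1 ?_).resolve_left hs
    linear_combination hz
  linear_combination s' * hX

lemma norm_sub_le_one_of_mem_cube {z : Fin q → ℝ × ℝ} (hz : z ∈ cube q) (i j : Fin q) :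
    ‖z i - z j‖ ≤ 1 := by
  obtain ⟨⟨hi1, hi1'⟩, ⟨hi2, hi2'⟩⟩ := hz i
  obtain ⟨⟨hj1, hj1'⟩, ⟨hj2, hj2'⟩⟩ := hz j
  rw [Prod.norm_def, Real.norm_eq_abs, Real.norm_eq_abs]
  exact max_le (abs_sub_le_iff.2 ⟨by simp; linarith, by simp; linarith⟩)
    (abs_sub_le_iff.2 ⟨by simp; linarith, by simp; linarith⟩)

lemma isVertex_iff {z : Fin q → ℝ × ℝ} : IsVertex M q z ↔ z ∈ cube q ∧
    ∀ z', (∀ H ∈ moveHyps M q ∪ facetHyps q, z ∈ H → z' ∈ H) → z' = z := by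
  rw [IsVertex, eq_singleton_iff_unique_mem]
  simp only [mem_sInter, mem_ofPred_eq, and_imp]
  exact and_congr_right fun _ => and_iff_right fun _ _ hz => hz

end AffineConfig

section Vertex

variable {q : ℕ} {M : Finset (ℤ × ℤ)} {c : ℝ × ℝ} {s : ℝ} {v : Fin q → ℤ × ℤ}

/-- The perturbed configuration stays on every facet and, by `affineConfig_mem_moveHyps`, on every
move hyperplane through the vertex, so it is the vertex itself. -/
lemma IsVertex.add_smul_castVec_eq_zero (hv : IsVertex M q (affineConfig c s v)) (hs : s ≠ 0)
    {u : ℝ × ℝ} {σ : ℝ}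
    (hx : ∀ p, (affineConfig c s v p).1 = 0 ∨ (affineConfig c s v p).1 = 1 →
      u.1 + σ * (v p).1 = 0)
    (hy : ∀ p, (affineConfig c s v p).2 = 0 ∨ (affineConfig c s v p).2 = 1 →
      u.2 + σ * (v p).2 = 0)
    (p : Fin q) : u + σ • castVec (v p) = 0 := by
  have hfix := (isVertex_iff.1 hv).2 (affineConfig (c + u) (s + σ) v) <| by
    rintro H (hH | ⟨i, rfl | rfl | rfl | rfl⟩) hz
    · exact affineConfig_mem_moveHyps hH hs hz _ _
    all_goals
      simp only [mem_ofPred_eq, affineConfig, Prod.fst_add, Prod.snd_add, Prod.smul_fst,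
        Prod.smul_snd, castVec_fst, castVec_snd, smul_eq_mul] at hz ⊢
    · linear_combination hz + hx i (Or.inl hz)
    · linear_combination hz + hx i (Or.inr hz)
    · linear_combination hz + hy i (Or.inl hz)
    · linear_combination hz + hy i (Or.inr hz)
  have := congrFun hfix p
  simp only [affineConfig, add_smul] at this
  linear_combination this

lemma IsVertex.exists_fst_mem_facet [NeZero q] (hv : IsVertex M q (affineConfig c s v))
    (hs : s ≠ 0) : ∃ p, (affineConfig c s v p).1 = 0 ∨ (affineConfig c s v p).1 = 1 := by
  by_contra! h
  have := hv.add_smul_castVec_eq_zero hs (u := (1, 0)) (σ := 0)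
    (fun p hp => absurd hp (by simpa using h p)) (fun _ _ => by simp) 0
  simp at this

lemma IsVertex.exists_snd_mem_facet [NeZero q] (hv : IsVertex M q (affineConfig c s v))
    (hs : s ≠ 0) : ∃ p, (affineConfig c s v p).2 = 0 ∨ (affineConfig c s v p).2 = 1 := by
  by_contra! h
  have := hv.add_smul_castVec_eq_zero hs (u := (0, 1)) (σ := 0)
    (fun _ _ => by simp) (fun p hp => absurd hp (by simpa using h p)) 0
  simp at this

lemma IsVertex.exists_facet_pair (hv : IsVertex M q (affineConfig c s v)) (hs : s ≠ 0)
    {i j : Fin q} (hij : v i ≠ v j) :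
    ∃ a b, ((affineConfig c s v a).1 = 0 ∨ (affineConfig c s v a).1 = 1) ∧
        ((affineConfig c s v b).1 = 0 ∨ (affineConfig c s v b).1 = 1) ∧ (v a).1 ≠ (v b).1 ∨
      ((affineConfig c s v a).2 = 0 ∨ (affineConfig c s v a).2 = 1) ∧
        ((affineConfig c s v b).2 = 0 ∨ (affineConfig c s v b).2 = 1) ∧ (v a).2 ≠ (v b).2 := by
  have : NeZero q := ⟨fun h => (h ▸ i).elim0⟩
  by_contra! h
  obtain ⟨a, ha⟩ := hv.exists_fst_mem_facet hs
  obtain ⟨b, hb⟩ := hv.exists_snd_mem_facet hs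
  -- the perturbation moving every shape point onto `((v a).1, (v b).2)` fixes all facets
  have hconst : ∀ p, castVec (v p) = castVec ((v a).1, (v b).2) := fun p => by
    have := hv.add_smul_castVec_eq_zero hs (u := -castVec ((v a).1, (v b).2)) (σ := 1)
      (fun p hp => by simp [(h p a).1 hp ha]) (fun p hp => by simp [(h p b).2 hp hb]) p
    rwa [one_smul, neg_add_eq_zero, eq_comm] at this
  exact hij (castVec_injective ((hconst i).trans (hconst j).symm))

lemma one_le_abs_sub_of_mem_facet {x y : ℝ} (hx : x = 0 ∨ x = 1) (hy : y = 0 ∨ y = 1)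
    (hxy : x ≠ y) : 1 ≤ |x - y| := by
  rcases hx with rfl | rfl <;> rcases hy with rfl | rfl <;> simp_all

/-- The cube gives `|s| * D ≤ 1`; two pieces on opposite facets of one coordinate give `≥`. -/
lemma IsVertex.abs_mul_eq_one (hv : IsVertex M q (affineConfig c s v)) {i j : Fin q}
    (hij : affineConfig c s v i ≠ affineConfig c s v j) {D : ℝ}
    (hD : IsGreatest (range fun p : Fin q × Fin q => ‖v p.1 - v p.2‖) D) : |s| * D = 1 := by
  have hnorm : ∀ a b, ‖affineConfig c s v a - affineConfig c s v b‖ = |s| * ‖v a - v b‖ :=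
    fun a b => by rw [affineConfig_sub, norm_smul, norm_castVec, Real.norm_eq_abs]
  have hs : s ≠ 0 := by rintro rfl; simp [affineConfig] at hij
  have hvij : v i ≠ v j := fun h => hij (by simp [affineConfig, h])
  apply le_antisymm
  · obtain ⟨⟨a, b⟩, hab⟩ := hD.1
    rw [← hab, ← hnorm]
    exact norm_sub_le_one_of_mem_cube (isVertex_iff.1 hv).1 a b
  · obtain ⟨a, b, hab⟩ := hv.exists_facet_pair hs hvij
    have hone : 1 ≤ ‖affineConfig c s v a - affineConfig c s v b‖ := by
      rw [Prod.norm_def, Real.norm_eq_abs, Real.norm_eq_abs]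
      rcases hab with ⟨ha, hb, hne⟩ | ⟨ha, hb, hne⟩
      · refine le_max_of_le_left (one_le_abs_sub_of_mem_facet ha hb fun h => hne ?_)
        simpa [affineConfig, hs] using h
      · refine le_max_of_le_right (one_le_abs_sub_of_mem_facet ha hb fun h => hne ?_)
        simpa [affineConfig, hs] using h
    calc 1 ≤ |s| * ‖v a - v b‖ := hnorm a b ▸ hone
      _ ≤ |s| * D := mul_le_mul_of_nonneg_left (hD.2 ⟨(a, b), rfl⟩) (abs_nonneg s)

end Vertex

section Denominator

variable {q : ℕ} {c : ℝ × ℝ} {s : ℝ} {v : Fin q → ℤ × ℤ} {D : ℕ}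

lemma exists_int_mul_eq_of_abs_mul_eq_one (hsD : |s| * D = 1) :
    ∃ σ : ℤ, s * D = σ ∧ σ * σ = 1 := by
  rcases abs_choice s with h | h <;> rw [h] at hsD
  · exact ⟨1, by simpa using hsD, rfl⟩
  · exact ⟨-1, by push_cast; linarith, rfl⟩

lemma natCast_dvd_of_abs_mul_eq_one {a k : ℤ} (hsD : |s| * D = 1) (h : s * a = k) :
    (D : ℤ) ∣ a := by
  obtain ⟨σ, hσ, hσσ⟩ := exists_int_mul_eq_of_abs_mul_eq_one hsD
  have hσσ' : (σ : ℝ) * σ = 1 := by exact_mod_cast hσσ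
  refine ⟨σ * k, ?_⟩
  have : (a : ℝ) = D * (σ * k) := by
    linear_combination ((D : ℝ) * σ) * h - (a * σ : ℝ) * hσ - (a : ℝ) * hσσ'
  exact_mod_cast this

lemma dvd_of_isIntegralizer {N : ℕ} (hsD : |s| * D = 1)
    (hN : IsIntegralizer N (affineConfig c s v)) (i j : Fin q) :
    (D : ℤ) ∣ N * (v i - v j).1 ∧ (D : ℤ) ∣ N * (v i - v j).2 := by
  obtain ⟨⟨a, ha⟩, ⟨b, hb⟩⟩ := hN.2 i
  obtain ⟨⟨a', ha'⟩, ⟨b', hb'⟩⟩ := hN.2 j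
  have hsub := affineConfig_sub (c := c) (s := s) (v := v) i j
  have h1 := congrArg Prod.fst hsub
  have h2 := congrArg Prod.snd hsub
  simp only [Prod.fst_sub, Prod.snd_sub, Prod.smul_fst, Prod.smul_snd, castVec_fst, castVec_snd,
    smul_eq_mul] at h1 h2
  refine ⟨natCast_dvd_of_abs_mul_eq_one hsD (k := a - a') ?_,
    natCast_dvd_of_abs_mul_eq_one hsD (k := b - b') ?_⟩
  · push_cast
    linear_combination -(N : ℝ) * h1 + ha - ha'
  · push_cast
    linear_combination -(N : ℝ) * h2 + hb - hb'

lemma isIntegralizer_affineConfig (hD : 0 < D) (hsD : |s| * D = 1) {i j : Fin q}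
    (hi : ∃ a : ℤ, (affineConfig c s v i).1 = a) (hj : ∃ b : ℤ, (affineConfig c s v j).2 = b) :
    IsIntegralizer D (affineConfig c s v) := by
  obtain ⟨σ, hσ, -⟩ := exists_int_mul_eq_of_abs_mul_eq_one hsD
  obtain ⟨a, ha⟩ := hi
  obtain ⟨b, hb⟩ := hj
  refine ⟨hD, fun p => ⟨⟨D * a + σ * ((v p).1 - (v i).1), ?_⟩,
    ⟨D * b + σ * ((v p).2 - (v j).2), ?_⟩⟩⟩
  all_goals
    simp only [affineConfig, Prod.fst_add, Prod.snd_add, Prod.smul_fst, Prod.smul_snd,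
      castVec_fst, castVec_snd, smul_eq_mul] at ha hb ⊢
    push_cast
  · linear_combination (D : ℝ) * ha + ((v p).1 - (v i).1 : ℝ) * hσ
  · linear_combination (D : ℝ) * hb + ((v p).2 - (v j).2 : ℝ) * hσ

end Denominator

lemma exists_sub_eq_of_abs_sub_eq {ι : Type*} {a : ι → ℤ} {d : ℤ} (hle : ∀ i j, a i - a j ≤ d)
    {p₀ : ι} (hmin : ∀ i, a p₀ ≤ a i) {i j : ι} (hij : |a i - a j| = d) :
    ∃ k, a k - a p₀ = d := by
  rcases abs_choice (a i - a j) with h | h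
  · exact ⟨i, le_antisymm (hle i p₀) (by linarith [hmin j])⟩
  · exact ⟨j, le_antisymm (hle j p₀) (by linarith [hmin i])⟩

section Existence

variable {q : ℕ} {M : Finset (ℤ × ℤ)} {v : Fin q → ℤ × ℤ} {D : ℕ}

lemma abs_sub_le_of_isGreatest_norm_sub
    (hD : IsGreatest (range fun p : Fin q × Fin q => ‖v p.1 - v p.2‖) D) (a b : Fin q) :
    |(v a).1 - (v b).1| ≤ D ∧ |(v a).2 - (v b).2| ≤ D := by
  have h := hD.2 ⟨(a, b), rfl⟩
  simp only [Prod.norm_def, Int.norm_eq_abs, max_le_iff, Prod.fst_sub, Prod.snd_sub] at h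
  exact_mod_cast h

lemma exists_abs_sub_eq_of_isGreatest_norm_sub
    (hD : IsGreatest (range fun p : Fin q × Fin q => ‖v p.1 - v p.2‖) D) :
    ∃ a b, |(v a).1 - (v b).1| = D ∨ |(v a).2 - (v b).2| = D := by
  obtain ⟨⟨a, b⟩, hab⟩ := hD.1
  simp only [Prod.norm_def, Int.norm_eq_abs, Prod.fst_sub, Prod.snd_sub] at hab
  refine ⟨a, b, ?_⟩
  rcases max_choice |(((v a).1 - (v b).1 : ℤ) : ℝ)| |(((v a).2 - (v b).2 : ℤ) : ℝ)| with h | h <;>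
    rw [h] at hab
  · exact Or.inl (by exact_mod_cast hab)
  · exact Or.inr (by exact_mod_cast hab)

lemma pos_of_isGreatest_norm_sub
    (hD : IsGreatest (range fun p : Fin q × Fin q => ‖v p.1 - v p.2‖) D) {i j : Fin q}
    (hij : v i ≠ v j) : (0 : ℝ) < D :=
  (norm_pos_iff.2 (sub_ne_zero.2 hij)).trans_le (hD.2 ⟨(i, j), rfl⟩)

/-- The vertex is the shape scaled by `1 / D` and translated so that its lowest and leftmost
pieces touch the facets `y = 0` and `x = 0`; a piece at distance `D` from them touches a third
facet, which fixes the scale. -/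
lemma exists_isVertex_affineConfig
    (hD : IsGreatest (range fun p : Fin q × Fin q => ‖v p.1 - v p.2‖) D) {i j : Fin q}
    (hij : v i ≠ v j)
    (hM : ∀ c s z', (∀ H ∈ moveHyps M q, affineConfig c s v ∈ H → z' ∈ H) →
      ∃ c' s', z' = affineConfig c' s' v) :
    ∃ c, IsVertex M q (affineConfig c (D : ℝ)⁻¹ v) := by
  have : Nonempty (Fin q) := ⟨i⟩
  have hDpos := pos_of_isGreatest_norm_sub hD hij
  have hle := abs_sub_le_of_isGreatest_norm_sub hD
  obtain ⟨p₁, hp₁⟩ := Finite.exists_min fun p => (v p).1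
  obtain ⟨p₂, hp₂⟩ := Finite.exists_min fun p => (v p).2
  set c : ℝ × ℝ := -(D : ℝ)⁻¹ • castVec ((v p₁).1, (v p₂).2)
  set z := affineConfig c (D : ℝ)⁻¹ v
  have hz1 : ∀ p, (z p).1 = ((v p).1 - (v p₁).1 : ℤ) / D := fun p => by
    simp only [z, c, affineConfig]; push_cast; simp; ring
  have hz2 : ∀ p, (z p).2 = ((v p).2 - (v p₂).2 : ℤ) / D := fun p => by
    simp only [z, c, affineConfig]; push_cast; simp; ring
  have hunit : ∀ {x : ℤ}, 0 ≤ x → x ≤ D → (x : ℝ) / D ∈ Icc (0 : ℝ) 1 := fun h0 h1 =>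
    ⟨div_nonneg (by exact_mod_cast h0) hDpos.le, (div_le_one hDpos).2 (by exact_mod_cast h1)⟩
  have hcube : z ∈ cube q := fun p => by
    rw [hz1, hz2]
    exact ⟨hunit (sub_nonneg.2 (hp₁ p)) (le_of_abs_le (hle p p₁).1),
      hunit (sub_nonneg.2 (hp₂ p)) (le_of_abs_le (hle p p₂).2)⟩
  refine ⟨c, isVertex_iff.2 ⟨hcube, fun z' hz' => ?_⟩⟩
  obtain ⟨c', s', rfl⟩ := hM _ _ z' fun H hH => hz' H (Or.inl hH)
  have hfacet1 : ∀ p, ∀ x : ℝ, (z p).1 = x → x = 0 ∨ x = 1 → (affineConfig c' s' v p).1 = x := by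
    rintro p x hx (rfl | rfl)
    · exact hz' {w | (w p).1 = 0} (Or.inr ⟨p, Or.inl rfl⟩) hx
    · exact hz' {w | (w p).1 = 1} (Or.inr ⟨p, Or.inr (Or.inl rfl)⟩) hx
  have hfacet2 : ∀ p, ∀ x : ℝ, (z p).2 = x → x = 0 ∨ x = 1 → (affineConfig c' s' v p).2 = x := by
    rintro p x hx (rfl | rfl)
    · exact hz' {w | (w p).2 = 0} (Or.inr ⟨p, Or.inr (Or.inr (Or.inl rfl))⟩) hx
    · exact hz' {w | (w p).2 = 1} (Or.inr ⟨p, Or.inr (Or.inr (Or.inr rfl))⟩) hx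
  have h0 : (z p₁).1 = 0 ∧ (z p₂).2 = 0 := by simp [hz1, hz2]
  have hc'1 := hfacet1 p₁ 0 h0.1 (Or.inl rfl)
  have hc'2 := hfacet2 p₂ 0 h0.2 (Or.inl rfl)
  have hscale : s' * D = 1 := by
    obtain ⟨a, b, hab⟩ := exists_abs_sub_eq_of_isGreatest_norm_sub hD
    rcases hab with hab | hab
    · obtain ⟨k, hk⟩ := exists_sub_eq_of_abs_sub_eq (fun a b => le_of_abs_le (hle a b).1) hp₁ hab
      have hk' := hfacet1 k 1 (by rw [hz1, hk]; exact div_self hDpos.ne') (Or.inr rfl)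
      have hkR : ((v k).1 - (v p₁).1 : ℝ) = D := by exact_mod_cast hk
      simp only [affineConfig, Prod.fst_add, Prod.smul_fst, castVec_fst, smul_eq_mul] at hk' hc'1
      linear_combination hk' - hc'1 - s' * hkR
    · obtain ⟨k, hk⟩ := exists_sub_eq_of_abs_sub_eq (fun a b => le_of_abs_le (hle a b).2) hp₂ hab
      have hk' := hfacet2 k 1 (by rw [hz2, hk]; exact div_self hDpos.ne') (Or.inr rfl)
      have hkR : ((v k).2 - (v p₂).2 : ℝ) = D := by exact_mod_cast hk
      simp only [affineConfig, Prod.snd_add, Prod.smul_snd, castVec_snd, smul_eq_mul] at hk' hc'2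
      linear_combination hk' - hc'2 - s' * hkR
  have hs' : s' = (D : ℝ)⁻¹ := eq_inv_of_mul_eq_one_left hscale
  subst hs'
  funext p
  refine Prod.ext ?_ ?_
  · rw [hz1]
    simp only [affineConfig, Prod.fst_add, Prod.smul_fst, castVec_fst, smul_eq_mul] at hc'1 ⊢
    push_cast
    linear_combination hc'1
  · rw [hz2]
    simp only [affineConfig, Prod.snd_add, Prod.smul_snd, castVec_snd, smul_eq_mul] at hc'2 ⊢
    push_cast
    linear_combination hc'2

end Existence

lemma dvd_mul_of_dvd_mul_smul {d N w : ℤ} {m : ℤ × ℤ} (hm : Int.gcd m.1 m.2 = 1)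
    (h : d ∣ N * (w • m).1 ∧ d ∣ N * (w • m).2) : d ∣ N * w := by
  have := Int.dvd_coe_gcd h.1 h.2
  simp only [Prod.smul_fst, Prod.smul_snd, smul_eq_mul, ← mul_assoc, Int.gcd_mul_left, hm,
    mul_one] at this
  exact Int.dvd_natAbs.1 this

section Triangle

variable {m1 m2 m3 : ℤ × ℤ} {w1 w2 w3 : ℤ}

/-- By `w₁ m₁ + w₂ m₂ + w₃ m₃ = 0`, the sides of this triangle are `w₁ m₁`, `w₂ m₂`, `w₃ m₃`. -/
def triangleShape (w1 w2 : ℤ) (m1 m2 : ℤ × ℤ) : Fin 3 → ℤ × ℤ := ![0, w1 • m1, -(w2 • m2)]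

def IsTriangular (m1 m2 m3 : ℤ × ℤ) (z : Fin 3 → ℝ × ℝ) : Prop :=
  (∃ t : ℝ, z 1 - z 0 = t • castVec m1) ∧ (∃ t : ℝ, z 2 - z 0 = t • castVec m2) ∧
    (∃ t : ℝ, z 2 - z 1 = t • castVec m3)

def triangleDenom (w1 w2 w3 : ℤ) (m1 m2 m3 : ℤ × ℤ) : ℕ :=
  max (max (max (w1 * m1.1).natAbs (w1 * m1.2).natAbs) (max (w2 * m2.1).natAbs (w2 * m2.2).natAbs))
    (max (w3 * m3.1).natAbs (w3 * m3.2).natAbs)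

@[simp] lemma triangleShape_zero : triangleShape w1 w2 m1 m2 0 = 0 := rfl

@[simp] lemma triangleShape_one : triangleShape w1 w2 m1 m2 1 = w1 • m1 := rfl

@[simp] lemma triangleShape_two : triangleShape w1 w2 m1 m2 2 = -(w2 • m2) := rfl

lemma triangleShape_two_sub_one (hsum : w1 • m1 + w2 • m2 + w3 • m3 = 0) :
    triangleShape w1 w2 m1 m2 2 - triangleShape w1 w2 m1 m2 1 = w3 • m3 := by
  calc triangleShape w1 w2 m1 m2 2 - triangleShape w1 w2 m1 m2 1
      = -(w1 • m1 + w2 • m2 + w3 • m3) + w3 • m3 := by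
        rw [triangleShape_two, triangleShape_one]; abel
    _ = w3 • m3 := by rw [hsum, neg_zero, zero_add]

lemma triangleShape_injective (hw1 : w1 ≠ 0) (hw2 : w2 ≠ 0) (hw3 : w3 ≠ 0) (hm1 : m1 ≠ 0)
    (hm2 : m2 ≠ 0) (hm3 : m3 ≠ 0) (hsum : w1 • m1 + w2 • m2 + w3 • m3 = 0) :
    Function.Injective (triangleShape w1 w2 m1 m2) := by
  have h10 : w1 • m1 ≠ 0 := smul_ne_zero hw1 hm1
  have h20 : -(w2 • m2) ≠ 0 := neg_ne_zero.2 (smul_ne_zero hw2 hm2)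
  have h21 : triangleShape w1 w2 m1 m2 2 - triangleShape w1 w2 m1 m2 1 ≠ 0 := by
    rw [triangleShape_two_sub_one hsum]; exact smul_ne_zero hw3 hm3
  intro i j h
  fin_cases i <;> fin_cases j <;> simp_all [eq_comm, sub_eq_zero]

lemma isTriangular_affineConfig (hsum : w1 • m1 + w2 • m2 + w3 • m3 = 0) (c : ℝ × ℝ) (s : ℝ) :
    IsTriangular m1 m2 m3 (affineConfig c s (triangleShape w1 w2 m1 m2)) := by
  refine ⟨⟨s * w1, ?_⟩, ⟨-(s * w2), ?_⟩, ⟨s * w3, ?_⟩⟩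
  all_goals rw [affineConfig_sub]
  · rw [triangleShape_one, triangleShape_zero, sub_zero, castVec_smul, smul_smul]
  · rw [triangleShape_two, triangleShape_zero, sub_zero, castVec_neg, castVec_smul, smul_neg,
      smul_smul, neg_smul]
  · rw [triangleShape_two_sub_one hsum, castVec_smul, smul_smul]

lemma IsTriangular.exists_eq_affineConfig (hdet : (m1.1 * m2.2 - m1.2 * m2.1 : ℝ) ≠ 0)
    (hw3 : w3 ≠ 0) (hsum : w1 • m1 + w2 • m2 + w3 • m3 = 0) {z : Fin 3 → ℝ × ℝ}
    (hz : IsTriangular m1 m2 m3 z) : ∃ c s, z = affineConfig c s (triangleShape w1 w2 m1 m2) := by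
  obtain ⟨⟨t1, h1⟩, ⟨t2, h2⟩, ⟨t3, h3⟩⟩ := hz
  have hsumR : (w1 : ℝ) • castVec m1 + (w2 : ℝ) • castVec m2 + (w3 : ℝ) • castVec m3 = 0 := by
    simpa only [castVec_add, castVec_smul, castVec_zero] using congrArg castVec hsum
  have key : (t3 * w1 - w3 * t1) • castVec m1 + (w3 * t2 + t3 * w2) • castVec m2 = 0 := by
    linear_combination (norm := module) -(w3 : ℝ) • (h2 - h1 - h3) + t3 • hsumR
  obtain ⟨hα, hβ⟩ := eq_zero_of_smul_add_smul_eq_zero hdet key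
  have hw3R : (w3 : ℝ) ≠ 0 := Int.cast_ne_zero.2 hw3
  refine ⟨z 0, t3 / w3, funext fun p => ?_⟩
  fin_cases p
  · simp [affineConfig]
  · have ht1 : t1 = t3 / w3 * w1 := by field_simp; linarith
    simp only [Fin.reduceFinMk, affineConfig, triangleShape_one, castVec_smul, smul_smul, ← ht1]
    exact (sub_eq_iff_eq_add').1 h1
  · have ht2 : t2 = -(t3 / w3 * w2) := by field_simp; linarith
    simp only [Fin.reduceFinMk, affineConfig, triangleShape_two]
    rw [castVec_neg, castVec_smul, smul_neg, smul_smul, ← neg_smul, ← ht2]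
    exact (sub_eq_iff_eq_add').1 h2

lemma IsTriangular.of_forall_mem_moveHyps (hm1 : m1 ≠ 0) (hm2 : m2 ≠ 0) (hm3 : m3 ≠ 0)
    {z z' : Fin 3 → ℝ × ℝ} (hz : IsTriangular m1 m2 m3 z)
    (h : ∀ H ∈ moveHyps {m1, m2, m3} 3, z ∈ H → z' ∈ H) : IsTriangular m1 m2 m3 z' := by
  have transfer : ∀ m ∈ ({m1, m2, m3} : Finset (ℤ × ℤ)), m ≠ 0 → ∀ i j : Fin 3, i < j →
      (∃ t : ℝ, z j - z i = t • castVec m) → ∃ t : ℝ, z' j - z' i = t • castVec m :=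
    fun m hm hm0 i j hij ht => (mem_moveHyp_iff hm0).1
      (h _ ⟨m, hm, i, j, hij, rfl⟩ ((mem_moveHyp_iff hm0).2 ht))
  exact ⟨transfer m1 (by simp) hm1 0 1 (by decide) hz.1,
    transfer m2 (by simp) hm2 0 2 (by decide) hz.2.1,
    transfer m3 (by simp) hm3 1 2 (by decide) hz.2.2⟩

lemma natCast_triangleDenom :
    (triangleDenom w1 w2 w3 m1 m2 m3 : ℝ) = max (max ‖w1 • m1‖ ‖w2 • m2‖) ‖w3 • m3‖ := by
  simp only [triangleDenom, Nat.cast_max, Nat.cast_natAbs, Prod.norm_def, Prod.smul_fst,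
    Prod.smul_snd, smul_eq_mul, Int.norm_eq_abs, Int.cast_abs]

lemma isGreatest_norm_sub_triangleShape (hsum : w1 • m1 + w2 • m2 + w3 • m3 = 0) :
    IsGreatest (range fun p : Fin 3 × Fin 3 =>
      ‖triangleShape w1 w2 m1 m2 p.1 - triangleShape w1 w2 m1 m2 p.2‖)
      (triangleDenom w1 w2 w3 m1 m2 m3) := by
  set v := triangleShape w1 w2 m1 m2
  have h10 : ‖v 1 - v 0‖ = ‖w1 • m1‖ := by simp [v]
  have h02 : ‖v 0 - v 2‖ = ‖w2 • m2‖ := by simp [v]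
  have h21 : ‖v 2 - v 1‖ = ‖w3 • m3‖ := by rw [triangleShape_two_sub_one hsum]
  rw [natCast_triangleDenom]
  refine ⟨?_, ?_⟩
  · rcases max_choice (max ‖w1 • m1‖ ‖w2 • m2‖) ‖w3 • m3‖ with h | h <;> rw [h]
    · rcases max_choice ‖w1 • m1‖ ‖w2 • m2‖ with h' | h' <;> rw [h']
      exacts [⟨(1, 0), h10⟩, ⟨(0, 2), h02⟩]
    · exact ⟨(2, 1), h21⟩
  · rintro _ ⟨⟨i, j⟩, rfl⟩
    have h01 := (norm_sub_rev (v 0) (v 1)).trans h10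
    have h20 := (norm_sub_rev (v 2) (v 0)).trans h02
    have h12 := (norm_sub_rev (v 1) (v 2)).trans h21
    fin_cases i <;> fin_cases j <;>
      simp [h10, h01, h02, h20, h21, h12]

lemma dvd_of_forall_dvd_triangleShape (hm1 : Int.gcd m1.1 m1.2 = 1)
    (hm2 : Int.gcd m2.1 m2.2 = 1) (hm3 : Int.gcd m3.1 m3.2 = 1)
    (hgcd : Int.gcd w1 (Int.gcd w2 w3) = 1) (hsum : w1 • m1 + w2 • m2 + w3 • m3 = 0) {D N : ℕ}
    (h : ∀ i j, (D : ℤ) ∣ N * (triangleShape w1 w2 m1 m2 i - triangleShape w1 w2 m1 m2 j).1 ∧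
      (D : ℤ) ∣ N * (triangleShape w1 w2 m1 m2 i - triangleShape w1 w2 m1 m2 j).2) : D ∣ N := by
  have h1 := dvd_mul_of_dvd_mul_smul hm1 (by simpa using h 1 0)
  have h2 := dvd_mul_of_dvd_mul_smul hm2 (by simpa using h 0 2)
  have h3 := dvd_mul_of_dvd_mul_smul hm3 (triangleShape_two_sub_one hsum ▸ h 2 1)
  have h23 := Int.dvd_coe_gcd h2 h3
  rw [Int.gcd_mul_left, Int.natAbs_natCast, Nat.cast_mul] at h23
  have := Int.dvd_coe_gcd h1 h23
  rwa [Int.gcd_mul_left, Int.natAbs_natCast, hgcd, mul_one, Int.natCast_dvd_natCast] at this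

end Triangle

theorem stmt12_general (m1 m2 m3 : ℤ × ℤ) (hne12 : m1 ≠ m2)
    (hM : IsMoveSet {m1, m2, m3})
    (w1 w2 w3 : ℤ) (hw1 : w1 ≠ 0) (hw2 : w2 ≠ 0) (hw3 : w3 ≠ 0)
    (hgcd : Int.gcd w1 (Int.gcd w2 w3) = 1)
    (hsum : w1 • m1 + w2 • m2 + w3 • m3 = 0) :
    (∀ z : Fin 3 → ℝ × ℝ, IsVertex {m1, m2, m3} 3 z →
      z 0 ≠ z 1 → z 0 ≠ z 2 → z 1 ≠ z 2 →
      (∃ t : ℝ, z 1 - z 0 = t • ((m1.1 : ℝ), (m1.2 : ℝ))) →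
      (∃ t : ℝ, z 2 - z 0 = t • ((m2.1 : ℝ), (m2.2 : ℝ))) →
      (∃ t : ℝ, z 2 - z 1 = t • ((m3.1 : ℝ), (m3.2 : ℝ))) →
      denom z = max (max (max (w1 * m1.1).natAbs (w1 * m1.2).natAbs)
          (max (w2 * m2.1).natAbs (w2 * m2.2).natAbs))
        (max (w3 * m3.1).natAbs (w3 * m3.2).natAbs)) ∧
    (∃ z : Fin 3 → ℝ × ℝ, IsVertex {m1, m2, m3} 3 z ∧
      z 0 ≠ z 1 ∧ z 0 ≠ z 2 ∧ z 1 ≠ z 2 ∧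
      (∃ t : ℝ, z 1 - z 0 = t • ((m1.1 : ℝ), (m1.2 : ℝ))) ∧
      (∃ t : ℝ, z 2 - z 0 = t • ((m2.1 : ℝ), (m2.2 : ℝ))) ∧
      (∃ t : ℝ, z 2 - z 1 = t • ((m3.1 : ℝ), (m3.2 : ℝ)))) := by
  obtain ⟨hm1, hm2, hm3⟩ : IsBasicMove m1 ∧ IsBasicMove m2 ∧ IsBasicMove m3 :=
    ⟨hM.1 m1 (by simp), hM.1 m2 (by simp), hM.1 m3 (by simp)⟩
  have hdet := mul_sub_mul_ne_zero_of_not_intPara hm1.1 (hM.2 m1 (by simp) m2 (by simp) hne12)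
  have hD := isGreatest_norm_sub_triangleShape (w3 := w3) (m3 := m3) hsum
  have hinj := triangleShape_injective hw1 hw2 hw3 hm1.1 hm2.1 hm3.1 hsum
  refine ⟨fun z hv h01 _ _ ht1 ht2 ht3 => ?_, ?_⟩
  · obtain ⟨c, s, rfl⟩ := IsTriangular.exists_eq_affineConfig hdet hw3 hsum ⟨ht1, ht2, ht3⟩
    have hsD := hv.abs_mul_eq_one h01 hD
    have hs : s ≠ 0 := by rintro rfl; simp at hsD
    have hDpos : 0 < triangleDenom w1 w2 w3 m1 m2 m3 := Nat.pos_of_ne_zero fun h => by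
      simp [h] at hsD
    obtain ⟨i, a, ha⟩ : ∃ i, ∃ a : ℤ, (affineConfig c s (triangleShape w1 w2 m1 m2) i).1 = a := by
      obtain ⟨i, hi | hi⟩ := hv.exists_fst_mem_facet hs
      exacts [⟨i, 0, by simp [hi]⟩, ⟨i, 1, by simp [hi]⟩]
    obtain ⟨j, b, hb⟩ : ∃ j, ∃ b : ℤ, (affineConfig c s (triangleShape w1 w2 m1 m2) j).2 = b := by
      obtain ⟨j, hj | hj⟩ := hv.exists_snd_mem_facet hs
      exacts [⟨j, 0, by simp [hj]⟩, ⟨j, 1, by simp [hj]⟩]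
    refine IsLeast.csInf_eq ⟨isIntegralizer_affineConfig hDpos hsD ⟨a, ha⟩ ⟨b, hb⟩, fun N hN => ?_⟩
    exact Nat.le_of_dvd hN.1 (dvd_of_forall_dvd_triangleShape hm1.2 hm2.2 hm3.2 hgcd hsum
      (dvd_of_isIntegralizer hsD hN))
  · have h01 : triangleShape w1 w2 m1 m2 0 ≠ triangleShape w1 w2 m1 m2 1 := hinj.ne (by decide)
    obtain ⟨c, hv⟩ := exists_isVertex_affineConfig hD h01
      fun c s z' h => ((isTriangular_affineConfig hsum c s).of_forall_mem_moveHyps hm1.1 hm2.1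
        hm3.1 h).exists_eq_affineConfig hdet hw3 hsum
    have hinj' := affineConfig_injective (c := c)
      (inv_ne_zero (pos_of_isGreatest_norm_sub hD h01).ne') hinj
    exact ⟨_, hv, hinj'.ne (by decide), hinj'.ne (by decide), hinj'.ne (by decide),
      isTriangular_affineConfig hsum _ _⟩

theorem stmt12 (m1 m2 m3 : ℤ × ℤ) (hne12 : m1 ≠ m2) (hne13 : m1 ≠ m3) (hne23 : m2 ≠ m3)
    (hM : IsMoveSet {m1, m2, m3})
    (w1 w2 w3 : ℤ) (hw1 : w1 ≠ 0) (hw2 : w2 ≠ 0) (hw3 : w3 ≠ 0)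
    (hgcd : Int.gcd w1 (Int.gcd w2 w3) = 1)
    (hsum : w1 • m1 + w2 • m2 + w3 • m3 = 0) :
    (∀ z : Fin 3 → ℝ × ℝ, IsVertex {m1, m2, m3} 3 z →
      z 0 ≠ z 1 → z 0 ≠ z 2 → z 1 ≠ z 2 →
      (∃ t : ℝ, z 1 - z 0 = t • ((m1.1 : ℝ), (m1.2 : ℝ))) →
      (∃ t : ℝ, z 2 - z 0 = t • ((m2.1 : ℝ), (m2.2 : ℝ))) →
      (∃ t : ℝ, z 2 - z 1 = t • ((m3.1 : ℝ), (m3.2 : ℝ))) →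
      denom z = max (max (max (w1 * m1.1).natAbs (w1 * m1.2).natAbs)
          (max (w2 * m2.1).natAbs (w2 * m2.2).natAbs))
        (max (w3 * m3.1).natAbs (w3 * m3.2).natAbs)) ∧
    (∃ z : Fin 3 → ℝ × ℝ, IsVertex {m1, m2, m3} 3 z ∧
      z 0 ≠ z 1 ∧ z 0 ≠ z 2 ∧ z 1 ≠ z 2 ∧
      (∃ t : ℝ, z 1 - z 0 = t • ((m1.1 : ℝ), (m1.2 : ℝ))) ∧
      (∃ t : ℝ, z 2 - z 0 = t • ((m2.1 : ℝ), (m2.2 : ℝ))) ∧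
      (∃ t : ℝ, z 2 - z 1 = t • ((m3.1 : ℝ), (m3.2 : ℝ)))) :=
  stmt12_general m1 m2 m3 hne12 hM w1 w2 w3 hw1 hw2 hw3 hgcd hsum
end

section
/- Let q ≥ 4, let M = {(1,0), (0,1), (−1,1)} be the semiqueen's move set, let F = F_{⌊q/2⌋}, and let z_1, …, z_q ∈ ℤ² be the golden rectangle positions: z_1 = (1,0) and, for 2 ≤ i ≤ q, z_i = (F_{⌊i/2⌋}, 0) if i ≡ 0 (mod 4); z_i = (F_{⌊i/2⌋}, F_{⌊i/2⌋−1}) if i ≡ 1 (mod 4); z_i = (0, F_{⌊i/2⌋}) if i ≡ 2 (mod 4); z_i = (F_{⌊i/2⌋−1}, F_{⌊i/2⌋}) if i ≡ 3 (mod 4). Then the point w = (z_1/F, …, z_q/F) lies in ([0,1]²)^q, is a vertex of the inside-out polytope (([0,1]²)^q, A_M^q), and has denominator Δ(w) = F_{⌊q/2⌋}. -/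
/-- Fibonacci numbers indexed so that F_0 = F_1 = 1, as integers. -/
def F (k : ℕ) : ℤ := (Nat.fib (k + 1) : ℤ)

/-- The golden rectangle positions of the semiqueens: z_1 = (1,0) and, for i ≥ 2,
z_i as dictated by i mod 4. -/
def goldenPos (i : ℕ) : ℤ × ℤ :=
  if i = 1 then (1, 0)
  else if i % 4 = 0 then (F (i / 2), 0)
  else if i % 4 = 1 then (F (i / 2), F (i / 2 - 1))
  else if i % 4 = 2 then (0, F (i / 2))
  else (F (i / 2 - 1), F (i / 2))

theorem F_add_two (n : ℕ) : F (n + 2) = F (n + 1) + F n := by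
  simp only [F, Nat.fib_add_two]; push_cast; ring

theorem one_le_F (n : ℕ) : 1 ≤ F n := by
  unfold F; exact_mod_cast Nat.fib_pos.mpr n.succ_pos

theorem F_pos (n : ℕ) : 0 < F n := zero_lt_one.trans_le (one_le_F n)

theorem F_mono {m n : ℕ} (h : m ≤ n) : F m ≤ F n := by
  unfold F; exact_mod_cast Nat.fib_mono (by omega)

theorem eq_one_or_exists_four_mul_add {i : ℕ} (hi : 1 ≤ i) :
    i = 1 ∨ ∃ t, i = 4 * t + 2 ∨ i = 4 * t + 3 ∨ i = 4 * t + 4 ∨ i = 4 * t + 5 := by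
  rcases eq_or_ne i 1 with h | h
  · exact .inl h
  · exact .inr ⟨(i - 2) / 4, by omega⟩

theorem goldenPos_one : goldenPos 1 = (1, 0) := rfl

theorem goldenPos_four_mul_add_two (t : ℕ) : goldenPos (4 * t + 2) = (0, F (2 * t + 1)) := by
  rw [goldenPos, if_neg (by omega), if_neg (by omega), if_neg (by omega), if_pos (by omega),
    show (4 * t + 2) / 2 = 2 * t + 1 by omega]

theorem goldenPos_four_mul_add_three (t : ℕ) :
    goldenPos (4 * t + 3) = (F (2 * t), F (2 * t + 1)) := by
  rw [goldenPos, if_neg (by omega), if_neg (by omega), if_neg (by omega), if_neg (by omega),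
    show (4 * t + 3) / 2 = 2 * t + 1 by omega, Nat.add_sub_cancel]

theorem goldenPos_four_mul_add_four (t : ℕ) : goldenPos (4 * t + 4) = (F (2 * t + 2), 0) := by
  rw [goldenPos, if_neg (by omega), if_pos (by omega), show (4 * t + 4) / 2 = 2 * t + 2 by omega]

theorem goldenPos_four_mul_add_five (t : ℕ) :
    goldenPos (4 * t + 5) = (F (2 * t + 2), F (2 * t + 1)) := by
  rw [goldenPos, if_neg (by omega), if_neg (by omega), if_pos (by omega),
    show (4 * t + 5) / 2 = 2 * t + 2 by omega, show 2 * t + 2 - 1 = 2 * t + 1 by omega]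

theorem goldenPos_four_mul_add_one_fst (t : ℕ) : (goldenPos (4 * t + 1)).1 = F (2 * t) := by
  cases t with
  | zero => rfl
  | succ s => rw [show 4 * (s + 1) + 1 = 4 * s + 5 by ring, goldenPos_four_mul_add_five]; rfl

theorem goldenPos_four_mul_add_one_fst_add_snd (t : ℕ) :
    (goldenPos (4 * t + 1)).1 + (goldenPos (4 * t + 1)).2 = F (2 * t + 1) := by
  cases t with
  | zero => rfl
  | succ s =>
    rw [show 4 * (s + 1) + 1 = 4 * s + 5 by ring, goldenPos_four_mul_add_five,
      show 2 * (s + 1) + 1 = 2 * s + 1 + 2 by ring, F_add_two (2 * s + 1)]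

theorem goldenPos_bounds {i q : ℕ} (hi : 1 ≤ i) (hiq : i ≤ q) :
    0 ≤ (goldenPos i).1 ∧ (goldenPos i).1 ≤ F (q / 2) ∧
      0 ≤ (goldenPos i).2 ∧ (goldenPos i).2 ≤ F (q / 2) := by
  have hF : ∀ k, 0 ≤ F k := fun k => (F_pos k).le
  rcases eq_one_or_exists_four_mul_add hi with rfl | ⟨t, rfl | rfl | rfl | rfl⟩ <;>
    simp only [goldenPos_one, goldenPos_four_mul_add_two, goldenPos_four_mul_add_three,
      goldenPos_four_mul_add_four, goldenPos_four_mul_add_five] <;>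
    refine ⟨?_, ?_, ?_, ?_⟩ <;>
    first
      | exact hF _ | exact F_mono (by omega) | exact le_rfl | exact one_le_F _ | exact zero_le_one

theorem goldenPos_last {q : ℕ} (hq : 1 ≤ q) :
    (goldenPos q).1 = F (q / 2) ∨ (goldenPos q).2 = F (q / 2) := by
  rcases eq_one_or_exists_four_mul_add hq with rfl | ⟨t, rfl | rfl | rfl | rfl⟩
  · exact .inl rfl
  · exact .inr (by rw [goldenPos_four_mul_add_two, show (4 * t + 2) / 2 = 2 * t + 1 by omega])
  · exact .inr (by rw [goldenPos_four_mul_add_three, show (4 * t + 3) / 2 = 2 * t + 1 by omega])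
  · exact .inl (by rw [goldenPos_four_mul_add_four, show (4 * t + 4) / 2 = 2 * t + 2 by omega])
  · exact .inl (by rw [goldenPos_four_mul_add_five, show (4 * t + 5) / 2 = 2 * t + 2 by omega])

/-- The relations that a configuration `Z` of pieces numbered `1, …, q` inherits from integer
positions `p`: the facets `x = 0`, `y = 0`, and the hyperplanes of the semiqueen moves `(0,1)`,
`(1,0)`, `(-1,1)`, which say that two pieces share a vertical, horizontal or antidiagonal line. -/
structure InheritsLines (q : ℕ) (p : ℕ → ℤ × ℤ) (Z : ℕ → ℝ × ℝ) : Prop where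
  fst_eq_zero : ∀ i, 1 ≤ i → i ≤ q → (p i).1 = 0 → (Z i).1 = 0
  snd_eq_zero : ∀ i, 1 ≤ i → i ≤ q → (p i).2 = 0 → (Z i).2 = 0
  fst_eq : ∀ i j, 1 ≤ i → i < j → j ≤ q → (p i).1 = (p j).1 → (Z i).1 = (Z j).1
  snd_eq : ∀ i j, 1 ≤ i → i < j → j ≤ q → (p i).2 = (p j).2 → (Z i).2 = (Z j).2
  add_eq : ∀ i j, 1 ≤ i → i < j → j ≤ q →
    (p i).1 + (p i).2 = (p j).1 + (p j).2 → (Z i).1 + (Z i).2 = (Z j).1 + (Z j).2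

namespace InheritsLines

variable {q : ℕ} {p : ℕ → ℤ × ℤ} {Z : ℕ → ℝ × ℝ} {a : ℝ} {i j k : ℕ}

theorem smul_of_fst_eq_of_snd_eq (h : InheritsLines q p Z) (hj : 1 ≤ j) (hk : 1 ≤ k)
    (hji : j < i) (hki : k < i) (hiq : i ≤ q) (hpj : (p j).1 = (p i).1) (hpk : (p k).2 = (p i).2)
    (hZj : (Z j).1 = a * (p j).1) (hZk : (Z k).2 = a * (p k).2) :
    (Z i).1 = a * (p i).1 ∧ (Z i).2 = a * (p i).2 := by
  rw [← h.fst_eq j i hj hji hiq hpj, ← h.snd_eq k i hk hki hiq hpk, hZj, hZk, hpj, hpk]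
  exact ⟨rfl, rfl⟩

theorem smul_of_fst_eq_zero (h : InheritsLines q p Z) (hj : 1 ≤ j) (hji : j < i) (hiq : i ≤ q)
    (hp0 : (p i).1 = 0) (hp : (p j).1 + (p j).2 = (p i).1 + (p i).2)
    (hZj : (Z j).1 = a * (p j).1 ∧ (Z j).2 = a * (p j).2) :
    (Z i).1 = a * (p i).1 ∧ (Z i).2 = a * (p i).2 := by
  have h0 := h.fst_eq_zero i (by omega) hiq hp0
  have hsum := h.add_eq j i hj hji hiq hp
  have hp' : ((p j).1 : ℝ) + (p j).2 = (p i).1 + (p i).2 := by exact_mod_cast hp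
  rw [hp0, Int.cast_zero] at hp' ⊢
  exact ⟨by rw [h0, mul_zero], by linear_combination -hsum - h0 + hZj.1 + hZj.2 + a * hp'⟩

theorem smul_of_snd_eq_zero (h : InheritsLines q p Z) (hj : 1 ≤ j) (hji : j < i) (hiq : i ≤ q)
    (hp0 : (p i).2 = 0) (hp : (p j).1 + (p j).2 = (p i).1 + (p i).2)
    (hZj : (Z j).1 = a * (p j).1 ∧ (Z j).2 = a * (p j).2) :
    (Z i).1 = a * (p i).1 ∧ (Z i).2 = a * (p i).2 := by
  have h0 := h.snd_eq_zero i (by omega) hiq hp0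
  have hsum := h.add_eq j i hj hji hiq hp
  have hp' : ((p j).1 : ℝ) + (p j).2 = (p i).1 + (p i).2 := by exact_mod_cast hp
  rw [hp0, Int.cast_zero] at hp' ⊢
  exact ⟨by linear_combination -hsum - h0 + hZj.1 + hZj.2 + a * hp', by rw [h0, mul_zero]⟩

theorem eq_smul_goldenPos (h : InheritsLines q goldenPos Z) (hi : 1 ≤ i) (hiq : i ≤ q) :
    (Z i).1 = (Z 1).1 * (goldenPos i).1 ∧ (Z i).2 = (Z 1).1 * (goldenPos i).2 := by
  induction i using Nat.strong_induction_on with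
  | _ i ih =>
  have ih' : ∀ j < i, 1 ≤ j → _ := fun j hji hj => ih j hji hj (by omega)
  rcases eq_one_or_exists_four_mul_add hi with rfl | ⟨t, rfl | rfl | rfl | rfl⟩
  · simp [goldenPos_one, h.snd_eq_zero 1 le_rfl hiq rfl]
  · exact h.smul_of_fst_eq_zero (j := 4 * t + 1) (by omega) (by omega) hiq
      (by rw [goldenPos_four_mul_add_two])
      (by rw [goldenPos_four_mul_add_one_fst_add_snd, goldenPos_four_mul_add_two, zero_add])
      (ih' _ (by omega) (by omega))
  · exact h.smul_of_fst_eq_of_snd_eq (j := 4 * t + 1) (k := 4 * t + 2) (by omega) (by omega)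
      (by omega) (by omega) hiq
      (by rw [goldenPos_four_mul_add_one_fst, goldenPos_four_mul_add_three])
      (by rw [goldenPos_four_mul_add_two, goldenPos_four_mul_add_three])
      (ih' _ (by omega) (by omega)).1 (ih' _ (by omega) (by omega)).2
  · exact h.smul_of_snd_eq_zero (j := 4 * t + 3) (by omega) (by omega) hiq
      (by rw [goldenPos_four_mul_add_four])
      (by rw [goldenPos_four_mul_add_three, goldenPos_four_mul_add_four, F_add_two]
          exact add_comm _ _)
      (ih' _ (by omega) (by omega))
  · exact h.smul_of_fst_eq_of_snd_eq (j := 4 * t + 4) (k := 4 * t + 3) (by omega) (by omega)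
      (by omega) (by omega) hiq
      (by rw [goldenPos_four_mul_add_four, goldenPos_four_mul_add_five])
      (by rw [goldenPos_four_mul_add_three, goldenPos_four_mul_add_five])
      (ih' _ (by omega) (by omega)).1 (ih' _ (by omega) (by omega)).2

end InheritsLines

theorem isVertex_of_forall_eq {M : Finset (ℤ × ℤ)} {q : ℕ} {w : Fin q → ℝ × ℝ} (hw : w ∈ cube q)
    (h : ∀ z, (∀ H ∈ moveHyps M q ∪ facetHyps q, w ∈ H → z ∈ H) → z = w) : IsVertex M q w :=
  ⟨hw, Set.Subset.antisymm (fun z hz => h z fun H hH hwH => hz H ⟨hH, hwH⟩)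
    (Set.singleton_subset_iff.2 fun _ hH => hH.2)⟩

theorem inheritsLines_of_forall_mem {q : ℕ} {c : ℝ} {p : ℕ → ℤ × ℤ} {w z : Fin q → ℝ × ℝ}
    {Z : ℕ → ℝ × ℝ} (hw : ∀ i : Fin q, w i = (c * (p (i + 1)).1, c * (p (i + 1)).2))
    (hz : ∀ H ∈ moveHyps {(1, 0), (0, 1), (-1, 1)} q ∪ facetHyps q, w ∈ H → z ∈ H)
    (hZ : ∀ i : Fin q, Z (i + 1) = z i) :
    InheritsLines q p Z := by
  have move : ∀ m ∈ ({(1, 0), (0, 1), (-1, 1)} : Finset (ℤ × ℤ)), ∀ i j : Fin q, i < j →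
      ((p (j + 1)).1 - (p (i + 1)).1) * m.2 - ((p (j + 1)).2 - (p (i + 1)).2) * m.1 = 0 →
      ((z j).1 - (z i).1) * m.2 - ((z j).2 - (z i).2) * m.1 = 0 := by
    intro m hm i j hij hp
    refine hz _ (.inl ⟨m, hm, i, j, hij, rfl⟩) ?_
    have hp' : (((p (j + 1)).1 - (p (i + 1)).1) * m.2 - ((p (j + 1)).2 - (p (i + 1)).2) * m.1
        : ℝ) = 0 := by exact_mod_cast hp
    simp only [Set.mem_ofPred_eq, hw]
    linear_combination c * hp'
  have piece : ∀ i, 1 ≤ i → i ≤ q → ∃ k : Fin q, i = k + 1 := fun i h1 h2 =>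
    ⟨⟨i - 1, by omega⟩, by simp only; omega⟩
  refine ⟨fun i h1 h2 h => ?_, fun i h1 h2 h => ?_, fun i j h1 hij h2 h => ?_,
    fun i j h1 hij h2 h => ?_, fun i j h1 hij h2 h => ?_⟩
  · obtain ⟨k, rfl⟩ := piece i h1 h2
    rw [hZ]
    exact hz _ (.inr ⟨k, .inl rfl⟩) (by simp [hw, h])
  · obtain ⟨k, rfl⟩ := piece i h1 h2
    rw [hZ]
    exact hz _ (.inr ⟨k, .inr (.inr (.inl rfl))⟩) (by simp [hw, h])
  all_goals
    obtain ⟨k, rfl⟩ := piece i h1 (by omega)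
    obtain ⟨l, rfl⟩ := piece j (by omega) h2
    have hkl : k < l := Fin.lt_def.2 (by omega)
    rw [hZ, hZ]
  · have := move (0, 1) (by simp) k l hkl (by rw [h]; ring)
    simp only [Int.cast_zero, Int.cast_one] at this
    linarith
  · have := move (1, 0) (by simp) k l hkl (by rw [h]; ring)
    simp only [Int.cast_zero, Int.cast_one] at this
    linarith
  · have := move (-1, 1) (by simp) k l hkl (by linear_combination -h)
    simp only [Int.cast_neg, Int.cast_one] at this
    linarith

theorem goldenPos_div_mem_cube {q : ℕ} {w : Fin q → ℝ × ℝ}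
    (hw : ∀ i : Fin q, w i =
      (((goldenPos (i + 1)).1 : ℝ) / F (q / 2), ((goldenPos (i + 1)).2 : ℝ) / F (q / 2))) :
    w ∈ cube q := by
  intro i
  obtain ⟨h1, h2, h3, h4⟩ := goldenPos_bounds (q := q) (i := i + 1) (by omega) i.isLt
  have hF : (0 : ℝ) < F (q / 2) := Int.cast_pos.2 (F_pos _)
  rw [hw]
  exact ⟨⟨div_nonneg (by exact_mod_cast h1) hF.le, (div_le_one hF).2 (by exact_mod_cast h2)⟩,
    ⟨div_nonneg (by exact_mod_cast h3) hF.le, (div_le_one hF).2 (by exact_mod_cast h4)⟩⟩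

theorem isVertex_goldenPos_div {q : ℕ} (hq : 1 ≤ q) {w : Fin q → ℝ × ℝ}
    (hw : ∀ i : Fin q, w i =
      (((goldenPos (i + 1)).1 : ℝ) / F (q / 2), ((goldenPos (i + 1)).2 : ℝ) / F (q / 2))) :
    IsVertex {(1, 0), (0, 1), (-1, 1)} q w := by
  refine isVertex_of_forall_eq (goldenPos_div_mem_cube hw) fun z hz => ?_
  have hF : (F (q / 2) : ℝ) ≠ 0 := Int.cast_ne_zero.2 (F_pos _).ne'
  let Z := Function.extend (fun i : Fin q => (i : ℕ) + 1) z 0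
  have hinj : Function.Injective fun i : Fin q => (i : ℕ) + 1 :=
    fun i j h => Fin.ext (Nat.succ_injective h)
  have hZ : ∀ i : Fin q, Z (i + 1) = z i := hinj.extend_apply z 0
  have hlines : InheritsLines q goldenPos Z :=
    inheritsLines_of_forall_mem (c := (F (q / 2) : ℝ)⁻¹)
      (fun i => by simp only [hw, div_eq_inv_mul]) hz hZ
  let last : Fin q := ⟨q - 1, by omega⟩
  have hlast : (last : ℕ) + 1 = q := Nat.sub_add_cancel hq
  have hscale : (Z 1).1 * F (q / 2) = 1 := by
    obtain ⟨hx, hy⟩ := hlines.eq_smul_goldenPos hq le_rfl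
    rw [show Z q = z last from hlast ▸ hZ last] at hx hy
    rcases goldenPos_last hq with h | h
    · rw [h] at hx
      rw [← hx]
      exact hz _ (.inr ⟨last, .inr (.inl rfl)⟩) (by simp [hw, hlast, h, hF])
    · rw [h] at hy
      rw [← hy]
      exact hz _ (.inr ⟨last, .inr (.inr (.inr rfl))⟩) (by simp [hw, hlast, h, hF])
  funext i
  obtain ⟨hx, hy⟩ := hlines.eq_smul_goldenPos (i := i + 1) (by omega) i.isLt
  rw [hZ, eq_inv_of_mul_eq_one_left hscale] at hx hy
  rw [hw, Prod.ext_iff, hx, hy, div_eq_inv_mul, div_eq_inv_mul]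
  exact ⟨rfl, rfl⟩

theorem isIntegralizer_of_eq_div {q N : ℕ} {z : Fin q → ℝ × ℝ} {p : Fin q → ℤ × ℤ} (hN : 0 < N)
    (hz : ∀ i, z i = (((p i).1 : ℝ) / N, ((p i).2 : ℝ) / N)) : IsIntegralizer N z :=
  ⟨hN, fun i => ⟨⟨(p i).1, by rw [hz]; field_simp⟩, ⟨(p i).2, by rw [hz]; field_simp⟩⟩⟩

theorem IsIntegralizer.le_of_fst_eq_inv {q N n : ℕ} {z : Fin q → ℝ × ℝ} (hN : IsIntegralizer N z)
    {i : Fin q} (hi : (z i).1 = (n : ℝ)⁻¹) (hn : 0 < n) : n ≤ N := by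
  obtain ⟨c, hc⟩ := (hN.2 i).1
  rw [hi] at hc
  have hNc : (N : ℤ) = c * n := by
    have : (N : ℝ) = c * n := by field_simp at hc; linarith
    exact_mod_cast this
  have hc0 : 0 < c := by
    by_contra! h
    nlinarith [hN.1]
  have : (n : ℤ) ≤ N := by nlinarith
  exact_mod_cast this

theorem stmt16 (q : ℕ) (hq : 4 ≤ q)
    (w : Fin q → ℝ × ℝ)
    (hw : w = fun i : Fin q =>
      (((goldenPos ((i : ℕ) + 1)).1 : ℝ) / (Nat.fib (q / 2 + 1) : ℝ),
        ((goldenPos ((i : ℕ) + 1)).2 : ℝ) / (Nat.fib (q / 2 + 1) : ℝ))) :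
    w ∈ cube q ∧ IsVertex {((1:ℤ), (0:ℤ)), ((0:ℤ), (1:ℤ)), ((-1:ℤ), (1:ℤ))} q w ∧
      denom w = Nat.fib (q / 2 + 1) := by
  have hF : ((F (q / 2) : ℤ) : ℝ) = Nat.fib (q / 2 + 1) := by simp [F]
  have hwF : ∀ i : Fin q, w i =
      (((goldenPos (i + 1)).1 : ℝ) / F (q / 2), ((goldenPos (i + 1)).2 : ℝ) / F (q / 2)) := by
    simp [hw, hF]
  refine ⟨goldenPos_div_mem_cube hwF, isVertex_goldenPos_div (by omega) hwF, ?_⟩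
  have hfib : 0 < Nat.fib (q / 2 + 1) := Nat.fib_pos.2 (Nat.succ_pos _)
  refine IsLeast.csInf_eq ⟨isIntegralizer_of_eq_div hfib fun i => congrFun hw i,
    fun N hN => hN.le_of_fst_eq_inv (i := ⟨0, by omega⟩) ?_ hfib⟩
  simp [hw, goldenPos_one]
end
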